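/- arXiv:1605.09679 — 10 statements merged into one kernel-verified Lean document; each statement's English description precedes it below -/
import Mathlib

section
/- Let L be a nonzero N×N real matrix (N ≥ 2) with zero row sums, i.e. L·𝟙_N = 0 (in particular, any balanced Laplacian matrix of an undirected graph). Partition L as a block matrix [[L₁₁, L_{1,2:N}], [L_{1,2:N}ᵀ, L_{2:N,2:N}]] with L₁₁ ∈ ℝ, and define the (N−1)×(N−1) matrix L̄ = L_{2:N,2:N} − 𝟙_{N−1} L_{1,2:N}, where 𝟙_{N−1} is the all-ones column vector. Then the characteristic polynomial of L equals X times the characteristic polynomial of L̄; in particular, the nonzero eigenvalues of L are exactly the nonzero eigenvalues of L̄ with the same algebraic multiplicities. -/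
/-!
Let `T` be the matrix whose column `0` is the all-ones vector and whose other columns are those
of the identity. Since `L 𝟙 = 0`, the similar matrix `T⁻¹ L T` has zero column `0`, and its
lower-right block is `L̄` (the inverse `T⁻¹` subtracts row `0` from every other row). Expanding
`det (X - T⁻¹ L T)` along column `0` then yields `X * charpoly L̄`.
-/

open Polynomial Matrix

namespace Matrix

variable {R : Type*} [CommRing R]

theorem charmatrix_submatrix {m n : Type*} [Fintype m] [DecidableEq m] [Fintype n] [DecidableEq n]
    (A : Matrix n n R) {e : m → n} (he : Function.Injective e) :
    charmatrix (A.submatrix e e) = (charmatrix A).submatrix e e := by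
  ext i j : 1
  by_cases h : i = j
  · simp [h]
  · simp [h, charmatrix_apply_ne _ _ _ (he.ne h)]

theorem charpoly_eq_X_mul_charpoly_submatrix_succ {n : ℕ}
    (A : Matrix (Fin (n + 1)) (Fin (n + 1)) R) (hA : ∀ i, A i 0 = 0) :
    A.charpoly = X * (A.submatrix Fin.succ Fin.succ).charpoly := by
  have hcol : ∀ i, charmatrix A i 0 = if i = 0 then X else 0 := by
    intro i
    split_ifs with h
    · simp [h, hA]
    · simp [charmatrix_apply_ne _ _ _ h, hA]
  rw [charpoly, det_succ_column_zero,
    Finset.sum_eq_single 0 (fun i _ hi => by rw [hcol, if_neg hi]; simp) (by simp), charpoly,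
    charmatrix_submatrix _ (Fin.succ_injective n), hcol]
  simp

variable (R) in
def colOnesShear (n : ℕ) : Matrix (Fin (n + 1)) (Fin (n + 1)) R :=
  of fun i j => if j = 0 ∨ i = j then 1 else 0

variable (R) in
def colOnesShearInv (n : ℕ) : Matrix (Fin (n + 1)) (Fin (n + 1)) R :=
  of fun i j => if i = j then 1 else if j = 0 then -1 else 0

variable {n : ℕ}

theorem mul_colOnesShear_apply (A : Matrix (Fin (n + 1)) (Fin (n + 1)) R) (i j : Fin (n + 1)) :
    (A * colOnesShear R n) i j = if j = 0 then ∑ k, A i k else A i j := by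
  split_ifs with h <;> simp [mul_apply, colOnesShear, h]

theorem colOnesShearInv_mul_apply (A : Matrix (Fin (n + 1)) (Fin (n + 1)) R) (i j : Fin (n + 1)) :
    (colOnesShearInv R n * A) i j = if i = 0 then A 0 j else A i j - A 0 j := by
  cases i using Fin.cases <;>
    simp [mul_apply, Fin.sum_univ_succ, colOnesShearInv, Fin.succ_ne_zero,
      (Fin.succ_ne_zero _).symm, sub_eq_neg_add]

theorem colOnesShearInv_mul_colOnesShear : colOnesShearInv R n * colOnesShear R n = 1 := by
  ext i j
  rw [colOnesShearInv_mul_apply]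
  by_cases hi : i = 0 <;> by_cases hj : j = 0 <;> by_cases hij : i = j <;>
    simp_all [colOnesShear, one_apply, eq_comm]

theorem charpoly_eq_X_mul_charpoly_of_mulVec_one_eq_zero
    (A : Matrix (Fin (n + 1)) (Fin (n + 1)) R) (hA : A *ᵥ (fun _ => 1) = 0) :
    A.charpoly = X * (of fun i j : Fin n => A i.succ j.succ - A 0 j.succ).charpoly := by
  have hconj : (colOnesShearInv R n * (A * colOnesShear R n)).charpoly = A.charpoly := by
    have hTS : colOnesShear R n * colOnesShearInv R n = 1 :=
      mul_eq_one_comm.mp colOnesShearInv_mul_colOnesShear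
    rw [charpoly_mul_comm, Matrix.mul_assoc, hTS, Matrix.mul_one]
  have hrow : ∀ i, ∑ k, A i k = 0 := fun i => by simpa [mulVec, dotProduct] using congrFun hA i
  rw [← hconj, charpoly_eq_X_mul_charpoly_submatrix_succ _ fun i => by
    simp [colOnesShearInv_mul_apply, mul_colOnesShear_apply, hrow]]
  congr 2
  ext i j
  simp [colOnesShearInv_mul_apply, mul_colOnesShear_apply, Fin.succ_ne_zero]

end Matrix

theorem stmt0_charpoly_reduction_general (m : ℕ)
    (L : Matrix (Fin (m + 1)) (Fin (m + 1)) ℝ)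
    (hrow : L.mulVec (fun _ => (1 : ℝ)) = 0) :
    L.charpoly =
      Polynomial.X *
        (Matrix.of fun i j : Fin m => L i.succ j.succ - L 0 j.succ).charpoly :=
  L.charpoly_eq_X_mul_charpoly_of_mulVec_one_eq_zero hrow

/-- Let `L` be a nonzero `(m+1) × (m+1)` real matrix (`m ≥ 1`, so `N = m+1 ≥ 2`)
with zero row sums, i.e. `L ⬝ 𝟙 = 0`.  With the block partition
`L = [[L₁₁, L_{1,2:N}], [L_{1,2:N}ᵀ, L_{2:N,2:N}]]`, define
`L̄ i j = L_{2:N,2:N} i j − (𝟙 L_{1,2:N}) i j = L (i+1) (j+1) − L 0 (j+1)`.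
Then `charpoly L = X * charpoly L̄`; in particular the nonzero eigenvalues of `L`
are exactly those of `L̄` with the same algebraic multiplicities. -/
theorem stmt0_charpoly_reduction (m : ℕ) (hm : 1 ≤ m)
    (L : Matrix (Fin (m + 1)) (Fin (m + 1)) ℝ)
    (hL0 : L ≠ 0)
    (hrow : L.mulVec (fun _ => (1 : ℝ)) = 0) :
    L.charpoly =
      Polynomial.X *
        (Matrix.of fun i j : Fin m => L i.succ j.succ - L 0 j.succ).charpoly :=
  stmt0_charpoly_reduction_general m L hrow
end

section
/- Let L be the Laplacian matrix of a connected undirected graph on N ≥ 2 vertices, partitioned as [[L₁₁, L_{1,2:N}], [L_{1,2:N}ᵀ, L_{2:N,2:N}]] with L₁₁ ∈ ℝ, and let L̄ = L_{2:N,2:N} − 𝟙_{N−1} L_{1,2:N}. Then the matrix −L̄ is Hurwitz, i.e. every (complex) eigenvalue of −L̄ has strictly negative real part. -/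
/-!
Let `D = succSubZero`, so that `D x = (x (i+1) - x 0)ᵢ`. Since `L 𝟙 = 0`, we have `L̄ D = D L`, so
every left eigenvector `v` of `L̄` lifts to the left eigenvector `v D` of `L` with the same
eigenvalue. Hence the spectrum of `L̄` lies in that of the positive semidefinite `L`, i.e. in
`[0, ∞)`. The lift `v D` is nonzero and orthogonal to `𝟙`, while `ker L = span 𝟙` for a connected
graph; so `L̄` is invertible and its spectrum lies in `(0, ∞)`.
-/

open Matrix
open scoped ComplexOrder

namespace Matrix

variable {R : Type*} {m : ℕ}

def lbar [Sub R] (A : Matrix (Fin (m + 1)) (Fin (m + 1)) R) : Matrix (Fin m) (Fin m) R :=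
  of fun i j => A i.succ j.succ - A 0 j.succ

def succSubZero (R : Type*) [Zero R] [One R] [Sub R] (m : ℕ) : Matrix (Fin m) (Fin (m + 1)) R :=
  of fun i k => (if k = i.succ then 1 else 0) - if k = 0 then 1 else 0

section Ring

variable [Ring R]

lemma lbar_map {S : Type*} [Ring S] (f : R →+* S) (A : Matrix (Fin (m + 1)) (Fin (m + 1)) R) :
    (lbar A).map f = lbar (A.map f) := by
  ext i j
  simp [lbar]

lemma succSubZero_mulVec (x : Fin (m + 1) → R) :
    succSubZero R m *ᵥ x = fun i => x i.succ - x 0 := by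
  ext i
  simp [succSubZero, mulVec, dotProduct, sub_mul]

lemma vecMul_succSubZero_succ (v : Fin m → R) (i : Fin m) :
    (v ᵥ* succSubZero R m) i.succ = v i := by
  simp [succSubZero, vecMul, dotProduct, Fin.succ_inj]

lemma sum_vecMul_succSubZero (v : Fin m → R) : ∑ k, (v ᵥ* succSubZero R m) k = 0 := by
  have := dotProduct_mulVec v (succSubZero R m) (fun _ => 1)
  simp_all [succSubZero_mulVec, dotProduct]

lemma vecMul_succSubZero_injective : Function.Injective (· ᵥ* succSubZero R m) :=
  fun v w h => funext fun i => by
    simpa only [vecMul_succSubZero_succ] using congrFun h i.succ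

lemma succSubZero_mul (A : Matrix (Fin (m + 1)) (Fin (m + 1)) R) :
    succSubZero R m * A = of fun i k => A i.succ k - A 0 k := by
  ext i k
  simp [succSubZero, mul_apply, sub_mul, ite_mul]

lemma lbar_mul_succSubZero {A : Matrix (Fin (m + 1)) (Fin (m + 1)) R}
    (hA : A *ᵥ (fun _ => 1) = 0) : lbar A * succSubZero R m = succSubZero R m * A := by
  have hrow : ∀ a, ∑ j : Fin m, A a j.succ = -A a 0 := fun a => by
    have := congrFun hA a
    simp only [mulVec, dotProduct, mul_one, Fin.sum_univ_succ, Pi.zero_apply] at this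
    exact eq_neg_of_add_eq_zero_right this
  rw [succSubZero_mul]
  ext i k
  induction k using Fin.cases with
  | zero =>
    simp [lbar, succSubZero, mul_apply, hrow, (Fin.succ_ne_zero _).symm]
    abel
  | succ k => simp [lbar, succSubZero, mul_apply, Fin.succ_inj]

end Ring

theorem spectrum_lbar_subset {K : Type*} [Field K] {A : Matrix (Fin (m + 1)) (Fin (m + 1)) K}
    (hA : A *ᵥ (fun _ => 1) = 0) : spectrum K (lbar A) ⊆ spectrum K A := by
  intro ν hν
  rw [spectrum.mem_iff, isUnit_iff_isUnit_det, isUnit_iff_ne_zero, not_not,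
    ← exists_vecMul_eq_zero_iff] at hν ⊢
  obtain ⟨v, hv, hvν⟩ := hν
  have intertwine : succSubZero K m * (algebraMap K (Matrix _ _ K) ν - A) =
      (algebraMap K (Matrix _ _ K) ν - lbar A) * succSubZero K m := by
    simp only [Matrix.mul_sub, Matrix.sub_mul, lbar_mul_succSubZero hA,
      Algebra.algebraMap_eq_smul_one, Matrix.mul_smul, Matrix.smul_mul, Matrix.mul_one,
      Matrix.one_mul]
  refine ⟨v ᵥ* succSubZero K m, ?_, ?_⟩
  · simpa using vecMul_succSubZero_injective.ne hv
  · rw [vecMul_vecMul, intertwine, ← vecMul_vecMul, hvν, zero_vecMul]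

theorem map_mem_spectrum_map_iff {K L : Type*} [Field K] [Field L] {n : Type*} [Fintype n]
    [DecidableEq n] (f : K →+* L) (A : Matrix n n K) (r : K) :
    f r ∈ spectrum L (A.map f) ↔ r ∈ spectrum K A := by
  have : algebraMap L (Matrix n n L) (f r) - A.map f = f.mapMatrix (algebraMap K _ r - A) := by
    ext i j
    simp [algebraMap_matrix_apply, apply_ite f]
  rw [spectrum.mem_iff, spectrum.mem_iff, this, isUnit_iff_isUnit_det, isUnit_iff_isUnit_det,
    ← RingHom.map_det, isUnit_map_iff]

theorem PosSemidef.map_ofReal {n : Type*} [Fintype n] {A : Matrix n n ℝ} (hA : A.PosSemidef) :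
    (A.map (algebraMap ℝ ℂ)).PosSemidef := by
  classical
  have hH : (A.map (algebraMap ℝ ℂ)).IsHermitian :=
    hA.isHermitian.map _ fun r => (Complex.conj_ofReal r).symm
  refine posSemidef_iff_isHermitian_and_spectrum_nonneg.mpr ⟨hH, ?_⟩
  rintro ν hν
  obtain ⟨r, -, rfl⟩ := hH.spectrum_eq_image_range ▸ hν
  have hr : r ∈ spectrum ℝ A := (map_mem_spectrum_map_iff (algebraMap ℝ ℂ) A r).mp hν
  exact Complex.zero_le_real.mpr ((posSemidef_iff_isHermitian_and_spectrum_nonneg.mp hA).2 hr)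

end Matrix

theorem SimpleGraph.Connected.det_lbar_lapMatrix_ne_zero {m : ℕ} {G : SimpleGraph (Fin (m + 1))}
    [DecidableRel G.Adj] (hG : G.Connected) : (lbar (G.lapMatrix ℝ)).det ≠ 0 := by
  rw [Ne, ← exists_vecMul_eq_zero_iff]
  rintro ⟨v, hv, hv0⟩
  set w := v ᵥ* succSubZero ℝ m
  have hLw : G.lapMatrix ℝ *ᵥ w = 0 := by
    rw [← vecMul_transpose, (G.isSymm_lapMatrix ℝ).eq, vecMul_vecMul,
      ← lbar_mul_succSubZero G.lapMatrix_mulVec_const_eq_zero, ← vecMul_vecMul, hv0, zero_vecMul]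
  have hconst : ∀ k, w k = w 0 := fun k =>
    (G.lapMatrix_mulVec_eq_zero_iff_forall_reachable.mp hLw) k 0 (hG.preconnected k 0)
  have hw0 : w 0 = 0 := by
    have := sum_vecMul_succSubZero v
    rw [Finset.sum_congr rfl fun k _ => hconst k] at this
    simp only [Finset.sum_const, Finset.card_univ, Fintype.card_fin, nsmul_eq_mul] at this
    exact (mul_eq_zero.mp this).resolve_left (by positivity)
  refine hv (vecMul_succSubZero_injective (R := ℝ) ?_)
  ext k
  simp [w, hconst k, hw0]

theorem stmt1_minus_Lbar_Hurwitz_general (m : ℕ)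
    (G : SimpleGraph (Fin (m + 1))) [DecidableRel G.Adj]
    (hconn : G.Connected)
    (L : Matrix (Fin (m + 1)) (Fin (m + 1)) ℝ)
    (hL : L = G.lapMatrix ℝ) :
    ∀ μ : ℂ,
      μ ∈ spectrum ℂ
        ((-(Matrix.of fun i j : Fin m => L i.succ j.succ - L 0 j.succ)).map
          (algebraMap ℝ ℂ)) →
      μ.re < 0 := by
  intro μ hμ
  subst hL
  set f := algebraMap ℝ ℂ
  have hμ' : -μ ∈ spectrum ℂ (lbar ((G.lapMatrix ℝ).map f)) := by
    rw [← Set.neg_mem_neg, spectrum.neg_eq, ← lbar_map, ← Matrix.map_neg _ (map_neg f), neg_neg]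
    exact hμ
  have hrow : (G.lapMatrix ℝ).map f *ᵥ (fun _ => 1) = 0 := by
    ext i
    simpa [Function.comp_def] using
      (f.map_mulVec _ _ i).symm.trans (congrArg f (congrFun G.lapMatrix_mulVec_const_eq_zero i))
  have hnonneg : 0 ≤ -μ := (posSemidef_iff_isHermitian_and_spectrum_nonneg.mp
    (G.posSemidef_lapMatrix ℝ).map_ofReal).2 (spectrum_lbar_subset hrow hμ')
  have hne : -μ ≠ 0 := by
    intro h
    rw [h, spectrum.zero_mem_iff, ← lbar_map, isUnit_iff_isUnit_det, ← f.mapMatrix_apply,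
      ← f.map_det] at hμ'
    exact hμ' (isUnit_iff_ne_zero.mpr ((map_ne_zero f).mpr hconn.det_lbar_lapMatrix_ne_zero))
  simpa using (Complex.pos_iff.mp (lt_of_le_of_ne hnonneg hne.symm)).1

/-- Let `L` be the Laplacian matrix of a connected undirected graph on
`N = m+1 ≥ 2` vertices, partitioned as `[[L₁₁, L_{1,2:N}], [L_{1,2:N}ᵀ, L_{2:N,2:N}]]`, and let
`L̄ = L_{2:N,2:N} − 𝟙_{N−1} L_{1,2:N}`, i.e. `L̄ i j = L (i+1) (j+1) − L 0 (j+1)`.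
Then `−L̄` is Hurwitz: every complex eigenvalue of `−L̄` has strictly negative real part. -/
theorem stmt1_minus_Lbar_Hurwitz (m : ℕ) (hm : 1 ≤ m)
    (G : SimpleGraph (Fin (m + 1))) [DecidableRel G.Adj]
    (hconn : G.Connected)
    (L : Matrix (Fin (m + 1)) (Fin (m + 1)) ℝ)
    (hL : L = G.lapMatrix ℝ) :
    ∀ μ : ℂ,
      μ ∈ spectrum ℂ
        ((-(Matrix.of fun i j : Fin m => L i.succ j.succ - L 0 j.succ)).map
          (algebraMap ℝ ℂ)) →
      μ.re < 0 :=
  stmt1_minus_Lbar_Hurwitz_general m G hconn L hL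
end

section
/- Let L be a symmetric N×N real matrix (N ≥ 2) with L·𝟙_N = 0, and suppose v ∈ ℝ^N is a nonzero vector with Lv = νv for some ν ≠ 0. Write v = (v_a, v_b) with v_a ∈ ℝ the first entry and v_b ∈ ℝ^{N−1}, and set ṽ = v_b − v_a·𝟙_{N−1}. Then ṽ ≠ 0 and L̄ṽ = νṽ, where L̄ = L_{2:N,2:N} − 𝟙_{N−1} L_{1,2:N}. -/
open Matrix

namespace Matrix

variable {R : Type*} [CommRing R] {m : ℕ}

/-- Subtracting the first entry from the remaining ones: `ṽ = v_b - v_a 𝟙`. -/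
def reduceVec (v : Fin (m + 1) → R) : Fin m → R := fun i => v i.succ - v 0

/-- `L̄ = L_{2:N,2:N} - 𝟙 L_{1,2:N}`. -/
def reduceMat (L : Matrix (Fin (m + 1)) (Fin (m + 1)) R) : Matrix (Fin m) (Fin m) R :=
  of fun i j => L i.succ j.succ - L 0 j.succ

theorem reduceVec_smul (c : R) (v : Fin (m + 1) → R) :
    reduceVec (c • v) = c • reduceVec v := by
  ext i
  simp only [reduceVec, Pi.smul_apply, smul_eq_mul, mul_sub]

theorem eq_const_of_reduceVec_eq_zero {v : Fin (m + 1) → R} (h : reduceVec v = 0) :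
    v = fun _ => v 0 := by
  funext k
  refine Fin.cases rfl (fun i => ?_) k
  exact sub_eq_zero.mp (congrFun h i)

theorem mulVec_const_eq_zero {n : Type*} [Fintype n] {L : Matrix n n R}
    (hrow : L *ᵥ (fun _ => 1) = 0) (c : R) : L *ᵥ (fun _ => c) = 0 := by
  have hc : (fun _ : n => c) = c • fun _ => (1 : R) := by
    funext; simp
  rw [hc, mulVec_smul, hrow, smul_zero]

/-- With zero row sums, the first column of `L` can be traded for the shift by `v 0`. -/
theorem sum_mul_reduceVec {L : Matrix (Fin (m + 1)) (Fin (m + 1)) R}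
    (hrow : L *ᵥ (fun _ => 1) = 0) (v : Fin (m + 1) → R) (k : Fin (m + 1)) :
    ∑ j, L k j.succ * reduceVec v j = (L *ᵥ v) k := by
  have hk : L k 0 + ∑ j : Fin m, L k j.succ = 0 := by
    simpa [mulVec, dotProduct, Fin.sum_univ_succ] using congrFun hrow k
  have hLv : (L *ᵥ v) k = L k 0 * v 0 + ∑ j : Fin m, L k j.succ * v j.succ := by
    simp [mulVec, dotProduct, Fin.sum_univ_succ]
  simp only [reduceVec, mul_sub, Finset.sum_sub_distrib, ← Finset.sum_mul, hLv]
  linear_combination (-v 0) * hk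

theorem reduceMat_mulVec_reduceVec {L : Matrix (Fin (m + 1)) (Fin (m + 1)) R}
    (hrow : L *ᵥ (fun _ => 1) = 0) (v : Fin (m + 1) → R) :
    reduceMat L *ᵥ reduceVec v = reduceVec (L *ᵥ v) := by
  ext i
  simp only [reduceMat, mulVec, dotProduct, of_apply, sub_mul, Finset.sum_sub_distrib]
  exact congrArg₂ (· - ·) (sum_mul_reduceVec hrow v i.succ) (sum_mul_reduceVec hrow v 0)

theorem reduceVec_ne_zero_of_mulVec_eq_smul [IsDomain R]
    {L : Matrix (Fin (m + 1)) (Fin (m + 1)) R} (hrow : L *ᵥ (fun _ => 1) = 0)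
    {v : Fin (m + 1) → R} (hv : v ≠ 0) {ν : R} (hν : ν ≠ 0) (heig : L *ᵥ v = ν • v) :
    reduceVec v ≠ 0 := by
  intro h
  have hLv : L *ᵥ v = 0 := by
    rw [eq_const_of_reduceVec_eq_zero h]
    exact mulVec_const_eq_zero hrow _
  exact hv ((smul_eq_zero.mp (heig ▸ hLv)).resolve_left hν)

end Matrix

theorem stmt2_eigenvector_reduction_general (m : ℕ)
    (L : Matrix (Fin (m + 1)) (Fin (m + 1)) ℝ)
    (hrow : L.mulVec (fun _ => (1 : ℝ)) = 0)
    (v : Fin (m + 1) → ℝ) (hv : v ≠ 0)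
    (ν : ℝ) (hν : ν ≠ 0)
    (heig : L.mulVec v = ν • v) :
    (fun i : Fin m => v i.succ - v 0) ≠ 0 ∧
      (Matrix.of fun i j : Fin m => L i.succ j.succ - L 0 j.succ).mulVec
          (fun i : Fin m => v i.succ - v 0) =
        ν • (fun i : Fin m => v i.succ - v 0) := by
  refine ⟨reduceVec_ne_zero_of_mulVec_eq_smul hrow hv hν heig, ?_⟩
  change reduceMat L *ᵥ reduceVec v = ν • reduceVec v
  rw [reduceMat_mulVec_reduceVec hrow, heig, reduceVec_smul]

/-- Let `L` be a symmetric `(m+1) × (m+1)` real matrix (`N = m+1 ≥ 2`) with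
`L ⬝ 𝟙 = 0`, and let `v ≠ 0` satisfy `L v = ν v` with `ν ≠ 0`.  Writing `v = (v_a, v_b)` with
`v_a = v 0 ∈ ℝ` and `v_b = (v 1, …, v m)`, set `ṽ i = v (i+1) − v 0`.  Then `ṽ ≠ 0` and
`L̄ ṽ = ν ṽ`, where `L̄ i j = L (i+1) (j+1) − L 0 (j+1)` is
`L_{2:N,2:N} − 𝟙_{N−1} L_{1,2:N}`. -/
theorem stmt2_eigenvector_reduction (m : ℕ) (hm : 1 ≤ m)
    (L : Matrix (Fin (m + 1)) (Fin (m + 1)) ℝ)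
    (hsymm : L.IsSymm)
    (hrow : L.mulVec (fun _ => (1 : ℝ)) = 0)
    (v : Fin (m + 1) → ℝ) (hv : v ≠ 0)
    (ν : ℝ) (hν : ν ≠ 0)
    (heig : L.mulVec v = ν • v) :
    (fun i : Fin m => v i.succ - v 0) ≠ 0 ∧
      (Matrix.of fun i j : Fin m => L i.succ j.succ - L 0 j.succ).mulVec
          (fun i : Fin m => v i.succ - v 0) =
        ν • (fun i : Fin m => v i.succ - v 0) :=
  stmt2_eigenvector_reduction_general m L hrow v hv ν hν heig
end

section
/- Let L be the Laplacian matrix of a connected undirected graph on N ≥ 2 vertices, partitioned as [[L₁₁, L_{1,2:N}], [L_{1,2:N}ᵀ, L_{2:N,2:N}]] with L₁₁ ∈ ℝ. Then there exist c₁ > 0 and μ > 0 such that the matrix A(c₁) = −(L_{2:N,2:N} − c₁·𝟙_{N−1} L_{1,2:N}) satisfies A(c₁) + A(c₁)ᵀ ≤ −μ·I_{N−1}, i.e. xᵀ(A(c₁) + A(c₁)ᵀ)x ≤ −μ|x|² for all x ∈ ℝ^{N−1}. -/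
/-!
Deleting the first vertex (index `0`) from the Laplacian of a connected graph leaves a positive
definite matrix `M = L_{2:N,2:N}`: a vector vanishing at that vertex lies in the kernel of `L` only
if it is constant, hence zero. So `xᵀ M x ≥ μ |x|²` for some `μ > 0`. The correction
`c₁ 𝟙 L_{1,2:N} = c₁ 𝟙 ℓᵀ` has rank one, and its quadratic form `c₁ (𝟙 ⬝ x) (ℓ ⬝ x)` is at most
`c₁ (|𝟙|² + |ℓ|²) |x|² / 2` by Cauchy–Schwarz, so it is absorbed into `μ |x|² / 2` once `c₁` is
small.
-/

open Matrix
open scoped MatrixOrder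

namespace Matrix

variable {n R : Type*} [Fintype n]

theorem dotProduct_add_transpose_mulVec [CommSemiring R] (A : Matrix n n R) (x : n → R) :
    x ⬝ᵥ (A + Aᵀ) *ᵥ x = 2 * (x ⬝ᵥ A *ᵥ x) := by
  rw [add_mulVec, dotProduct_add, mulVec_transpose, dotProduct_comm x (x ᵥ* A),
    ← dotProduct_mulVec, two_mul]

theorem dotProduct_vecMulVec_mulVec [CommSemiring R] (u v x : n → R) :
    x ⬝ᵥ vecMulVec u v *ᵥ x = (u ⬝ᵥ x) * (v ⬝ᵥ x) := by
  simp [vecMulVec_mulVec, dotProduct_comm, mul_comm]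

section Ordered

variable [CommRing R] [LinearOrder R] [IsStrictOrderedRing R]

theorem dotProduct_self_nonneg (x : n → R) : 0 ≤ x ⬝ᵥ x :=
  Finset.sum_nonneg fun i _ => mul_self_nonneg (x i)

theorem sq_dotProduct_le (u x : n → R) : (u ⬝ᵥ x) ^ 2 ≤ (u ⬝ᵥ u) * (x ⬝ᵥ x) := by
  simpa [dotProduct, sq] using Finset.sum_mul_sq_le_sq_mul_sq Finset.univ u x

theorem two_mul_dotProduct_mul_dotProduct_le (u v x : n → R) :
    2 * ((u ⬝ᵥ x) * (v ⬝ᵥ x)) ≤ (u ⬝ᵥ u + v ⬝ᵥ v) * (x ⬝ᵥ x) := by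
  nlinarith [sq_dotProduct_le u x, sq_dotProduct_le v x, sq_nonneg (u ⬝ᵥ x - v ⬝ᵥ x)]

end Ordered

theorem exists_pos_coercive_sub_smul_vecMulVec [Field R] [LinearOrder R]
    [IsStrictOrderedRing R] {M : Matrix n n R} {r : R} (hr : 0 < r)
    (hM : ∀ x, r * (x ⬝ᵥ x) ≤ x ⬝ᵥ M *ᵥ x) (u v : n → R) :
    ∃ c > (0 : R), ∀ x, r / 2 * (x ⬝ᵥ x) ≤ x ⬝ᵥ (M - c • vecMulVec u v) *ᵥ x := by
  set K := u ⬝ᵥ u + v ⬝ᵥ v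
  have hK : 0 ≤ K := add_nonneg (dotProduct_self_nonneg u) (dotProduct_self_nonneg v)
  set c := r / (K + 1)
  have hc : 0 < c := div_pos hr (by linarith)
  have hcK : c * K ≤ r := by
    rw [div_mul_eq_mul_div, div_le_iff₀ (by linarith)]
    linarith
  refine ⟨c, hc, fun x => ?_⟩
  have hrank := mul_le_mul_of_nonneg_left (two_mul_dotProduct_mul_dotProduct_le u v x) hc.le
  rw [sub_mulVec, dotProduct_sub, smul_mulVec, dotProduct_smul, smul_eq_mul,
    dotProduct_vecMulVec_mulVec]
  linarith [hM x, mul_le_mul_of_nonneg_right hcK (dotProduct_self_nonneg x)]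

theorem PosDef.exists_pos_mul_dotProduct_self_le [DecidableEq n] [Nonempty n]
    {M : Matrix n n ℝ} (hM : M.PosDef) : ∃ r > 0, ∀ x : n → ℝ, r * (x ⬝ᵥ x) ≤ x ⬝ᵥ M *ᵥ x := by
  obtain ⟨r, hr, hle⟩ := (CFC.exists_pos_algebraMap_le_iff hM.isHermitian.isSelfAdjoint).2
    fun _ h => hM.isStrictlyPositive.spectrum_pos h
  refine ⟨r, hr, fun x => ?_⟩
  have := (Matrix.le_iff.1 hle).dotProduct_mulVec_nonneg x
  rwa [star_trivial, Algebra.algebraMap_eq_smul_one, sub_mulVec, dotProduct_sub, smul_mulVec,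
    one_mulVec, dotProduct_smul, smul_eq_mul, sub_nonneg] at this

end Matrix

theorem SimpleGraph.posDef_lapMatrix_submatrix_succ {m : ℕ} {G : SimpleGraph (Fin (m + 1))}
    [DecidableRel G.Adj] (hG : G.Connected) :
    ((G.lapMatrix ℝ).submatrix Fin.succ Fin.succ).PosDef := by
  refine .of_dotProduct_mulVec_pos ((G.isSymm_lapMatrix (R := ℝ)).submatrix _) fun x hx => ?_
  set y : Fin (m + 1) → ℝ := Fin.cons 0 x
  have hquad : star x ⬝ᵥ (G.lapMatrix ℝ).submatrix Fin.succ Fin.succ *ᵥ x =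
      star y ⬝ᵥ G.lapMatrix ℝ *ᵥ y := by
    simp [y, dotProduct, mulVec, Fin.sum_univ_succ]
  have hLy : G.lapMatrix ℝ *ᵥ y ≠ 0 := by
    rw [Ne, lapMatrix_mulVec_eq_zero_iff_forall_reachable]
    refine fun h => hx (funext fun i => ?_)
    simpa [y] using h i.succ 0 (hG.preconnected _ _)
  rw [hquad]
  exact ((G.posSemidef_lapMatrix ℝ).dotProduct_mulVec_nonneg y).lt_of_ne'
    (mt ((G.posSemidef_lapMatrix ℝ).dotProduct_mulVec_zero_iff y).1 hLy)

/-- **Lemma 2 of the paper.** Let `L` be the Laplacian matrix of a connected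
undirected graph on `N = m+1 ≥ 2` vertices, partitioned as
`[[L₁₁, L_{1,2:N}], [L_{1,2:N}ᵀ, L_{2:N,2:N}]]`.  Then there exist `c₁ > 0` and `μ > 0` such
that `A(c₁) = −(L_{2:N,2:N} − c₁ 𝟙_{N−1} L_{1,2:N})` satisfies
`xᵀ (A(c₁) + A(c₁)ᵀ) x ≤ −μ |x|²` for all `x ∈ ℝ^{N−1}`. -/
theorem stmt4_Ac1_negative_definite (m : ℕ) (hm : 1 ≤ m)
    (G : SimpleGraph (Fin (m + 1))) [DecidableRel G.Adj]
    (hconn : G.Connected)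
    (L : Matrix (Fin (m + 1)) (Fin (m + 1)) ℝ)
    (hL : L = G.lapMatrix ℝ) :
    ∃ c₁ > (0 : ℝ), ∃ μ > (0 : ℝ),
      ∀ x : Fin m → ℝ,
        x ⬝ᵥ
            (((-(Matrix.of fun i j : Fin m => L i.succ j.succ - c₁ * L 0 j.succ)) +
                (-(Matrix.of fun i j : Fin m => L i.succ j.succ - c₁ * L 0 j.succ))ᵀ).mulVec
              x) ≤
          -μ * (x ⬝ᵥ x) := by
  subst hL
  have : Nonempty (Fin m) := ⟨⟨0, hm⟩⟩
  set ℓ : Fin m → ℝ := fun j => G.lapMatrix ℝ 0 j.succ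
  obtain ⟨μ, hμ, hM⟩ :=
    (SimpleGraph.posDef_lapMatrix_submatrix_succ hconn).exists_pos_mul_dotProduct_self_le
  obtain ⟨c₁, hc₁, hcoer⟩ := exists_pos_coercive_sub_smul_vecMulVec hμ hM 1 ℓ
  refine ⟨c₁, hc₁, μ, hμ, fun x => ?_⟩
  have hA : (Matrix.of fun i j : Fin m => G.lapMatrix ℝ i.succ j.succ - c₁ * ℓ j) =
      (G.lapMatrix ℝ).submatrix Fin.succ Fin.succ - c₁ • vecMulVec 1 ℓ := by
    ext i j
    simp [vecMulVec]
  rw [hA, dotProduct_add_transpose_mulVec, neg_mulVec, dotProduct_neg]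
  linarith [hcoer x]
end

section
/- Let P_N = [[S, T], [Tᵀ, R]] be a symmetric real (a+b)×(a+b) matrix in block form with S of size a×a and R of size b×b, and suppose p̲·I ≤ P_N ≤ p̄·I for some constants 0 < p̲ ≤ p̄. Then R is invertible, |T Tᵀ| ≤ p̄² (operator norm), and the Schur complement P = S − T R⁻¹ Tᵀ satisfies p̲·I_a ≤ P ≤ p̄(1 + p̄²/p̲²)·I_a. -/
open Matrix
open scoped Matrix.Norms.L2Operator

/-!
Adding `p̲ • 1` to the lower-right block only increases a block matrix, so `p̲ ≤ P_N` gives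
`[[S - p̲, T], [Tᵀ, R]] ≥ 0` with `R ≥ p̲ > 0`, and the Schur complement criterion turns this into
`P ≥ p̲`. From above, `P ≤ S ≤ p̄` because `T R⁻¹ Tᵀ ≥ 0`. For the norm, adding the nonnegative
diagonal blocks of `P_N` to `p̄ - P_N ≥ 0` gives `[[p̄, -T], [-Tᵀ, p̄]] ≥ 0`, whose Schur complement
is `p̄ - T Tᵀ / p̄ ≥ 0`; hence `‖Tᵀ‖ ≤ p̄` and `‖T Tᵀ‖ = ‖Tᵀ‖² ≤ p̄²`.
-/

open scoped ComplexOrder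

namespace Matrix

variable {𝕜 m n : Type*} [RCLike 𝕜]

section BlockAlgebra

variable [DecidableEq m] [DecidableEq n]

lemma fromBlocks_sub_smul_one (A : Matrix m m 𝕜) (B : Matrix m n 𝕜) (C : Matrix n m 𝕜)
    (D : Matrix n n 𝕜) (c : ℝ) :
    fromBlocks A B C D - c • 1 = fromBlocks (A - c • 1) B C (D - c • 1) := by
  ext (i | i) (j | j) <;> simp [one_apply]

lemma smul_one_sub_fromBlocks (A : Matrix m m 𝕜) (B : Matrix m n 𝕜) (C : Matrix n m 𝕜)
    (D : Matrix n n 𝕜) (c : ℝ) :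
    c • 1 - fromBlocks A B C D = fromBlocks (c • 1 - A) (-B) (-C) (c • 1 - D) := by
  ext (i | i) (j | j) <;> simp [one_apply]

end BlockAlgebra

namespace PosSemidef

lemma of_fromBlocks₁₁ {A : Matrix m m 𝕜} {B : Matrix m n 𝕜} {C : Matrix n m 𝕜}
    {D : Matrix n n 𝕜} (h : (fromBlocks A B C D).PosSemidef) : A.PosSemidef :=
  h.submatrix Sum.inl

lemma of_fromBlocks₂₂ {A : Matrix m m 𝕜} {B : Matrix m n 𝕜} {C : Matrix n m 𝕜}
    {D : Matrix n n 𝕜} (h : (fromBlocks A B C D).PosSemidef) : D.PosSemidef :=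
  h.submatrix Sum.inr

lemma fromBlocks_zero [Fintype m] [Fintype n] {A : Matrix m m 𝕜} {D : Matrix n n 𝕜}
    (hA : A.PosSemidef) (hD : D.PosSemidef) : (fromBlocks A 0 0 D).PosSemidef := by
  refine .of_dotProduct_mulVec_nonneg (hA.isHermitian.fromBlocks (by simp) hD.isHermitian)
    fun x => ?_
  rw [← Sum.elim_comp_inl_inr x, fromBlocks_mulVec, Function.star_sumElim,
    sumElim_dotProduct_sumElim]
  simpa using add_nonneg (hA.dotProduct_mulVec_nonneg (x ∘ Sum.inl))
    (hD.dotProduct_mulVec_nonneg (x ∘ Sum.inr))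

variable [DecidableEq n] {A : Matrix n n 𝕜} {c : ℝ}

lemma of_sub_smul_one (h : (A - c • 1).PosSemidef) (hc : 0 ≤ c) : A.PosSemidef := by
  simpa using h.add (PosSemidef.one.smul hc)

lemma smul_one_sub_of_le {c' : ℝ} (h : (c • 1 - A).PosSemidef) (hcc' : c ≤ c') :
    (c' • 1 - A).PosSemidef := by
  have hsplit : c' • 1 - A = (c • 1 - A) + (c' - c) • (1 : Matrix n n 𝕜) := by
    rw [sub_smul]; abel
  rw [hsplit]
  exact h.add (PosSemidef.one.smul (sub_nonneg.mpr hcc'))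

lemma posDef_of_sub_smul_one (h : (A - c • 1).PosSemidef) (hc : 0 < c) : A.PosDef := by
  simpa using PosDef.posSemidef_add h (PosDef.one.smul hc)

end PosSemidef

variable [Fintype m] [Fintype n] [DecidableEq m] [DecidableEq n]

lemma posSemidef_schur_sub_smul_one {A : Matrix m m 𝕜} {B : Matrix m n 𝕜} {D : Matrix n n 𝕜}
    {c : ℝ} (hc : 0 ≤ c) (hD : D.PosDef) (h : (fromBlocks A B Bᴴ D - c • 1).PosSemidef) :
    (A - B * D⁻¹ * Bᴴ - c • 1).PosSemidef := by
  let := hD.isUnit.invertible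
  rw [fromBlocks_sub_smul_one] at h
  have h' : (fromBlocks (A - c • 1) B Bᴴ D).PosSemidef := by
    simpa [fromBlocks_add] using h.add (.fromBlocks_zero .zero (PosSemidef.one.smul hc))
  rw [sub_right_comm]
  exact (PosDef.fromBlocks₂₂ _ _ hD).mp h'

lemma posSemidef_smul_one_sub_schur {A : Matrix m m 𝕜} {B : Matrix m n 𝕜} {D : Matrix n n 𝕜}
    {c : ℝ} (hD : D.PosDef) (h : (c • 1 - fromBlocks A B Bᴴ D).PosSemidef) :
    (c • 1 - (A - B * D⁻¹ * Bᴴ)).PosSemidef := by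
  rw [smul_one_sub_fromBlocks] at h
  rw [sub_sub_eq_add_sub, add_sub_right_comm]
  exact h.of_fromBlocks₁₁.add (hD.inv.posSemidef.mul_mul_conjTranspose_same B)

lemma posSemidef_sq_smul_one_sub_mul_conjTranspose {B : Matrix m n 𝕜} {c : ℝ} (hc : 0 < c)
    (h : (fromBlocks (c • 1) B Bᴴ (c • 1)).PosSemidef) : (c ^ 2 • 1 - B * Bᴴ).PosSemidef := by
  have hc1 : (c • 1 : Matrix n n 𝕜).PosDef := PosDef.one.smul hc
  let := hc1.isUnit.invertible
  have hinv : (c • 1 : Matrix n n 𝕜)⁻¹ = c⁻¹ • 1 :=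
    inv_eq_right_inv (by simp [smul_smul, hc.ne'])
  have := ((PosDef.fromBlocks₂₂ _ _ hc1).mp h).smul hc.le
  simpa [hinv, smul_sub, smul_smul, hc.ne', sq] using this

omit [Fintype m] [DecidableEq m] [DecidableEq n] in
lemma ofReal_norm_toLp_sq (v : n → 𝕜) : ((‖WithLp.toLp 2 v‖ ^ 2 : ℝ) : 𝕜) = star v ⬝ᵥ v := by
  simp [EuclideanSpace.norm_sq_eq, dotProduct, RCLike.conj_mul]

omit [DecidableEq m] in
lemma l2_opNorm_le_of_posSemidef {A : Matrix m n 𝕜} {c : ℝ} (hc : 0 ≤ c)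
    (h : (c ^ 2 • 1 - Aᴴ * A).PosSemidef) : ‖A‖ ≤ c := by
  rw [l2_opNorm_def]
  refine ContinuousLinearMap.opNorm_le_bound _ hc fun x => ?_
  refine (sq_le_sq₀ (norm_nonneg _) (by positivity)).mp ?_
  have hx := h.dotProduct_mulVec_nonneg x.ofLp
  rw [sub_mulVec, dotProduct_sub, sub_nonneg, ← mulVec_mulVec, dotProduct_mulVec,
    ← star_mulVec, smul_mulVec, one_mulVec, dotProduct_smul] at hx
  rw [mul_pow, ← RCLike.ofReal_le_ofReal (K := 𝕜)]
  convert hx using 1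
  · exact ofReal_norm_toLp_sq _
  · rw [RCLike.ofReal_mul, ← ofReal_norm_toLp_sq]
    simp [RCLike.real_smul_eq_coe_mul]

lemma l2_opNorm_mul_conjTranspose_le {A : Matrix m m 𝕜} {B : Matrix m n 𝕜} {D : Matrix n n 𝕜}
    {c : ℝ} (hc : 0 < c) (hM : (fromBlocks A B Bᴴ D).PosSemidef)
    (h : (c • 1 - fromBlocks A B Bᴴ D).PosSemidef) : ‖B * Bᴴ‖ ≤ c ^ 2 := by
  rw [smul_one_sub_fromBlocks] at h
  have hc' : (fromBlocks (c • 1) (-B) (-B)ᴴ (c • 1)).PosSemidef := by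
    simpa [fromBlocks_add] using h.add (.fromBlocks_zero hM.of_fromBlocks₁₁ hM.of_fromBlocks₂₂)
  have hB : ‖Bᴴ‖ ≤ c := l2_opNorm_le_of_posSemidef hc.le
    (by simpa using posSemidef_sq_smul_one_sub_mul_conjTranspose hc hc')
  calc ‖B * Bᴴ‖ = ‖Bᴴ‖ * ‖Bᴴ‖ := by simpa using l2_opNorm_conjTranspose_mul_self Bᴴ
    _ ≤ c ^ 2 := by rw [sq]; exact mul_le_mul hB hB (norm_nonneg _) hc.le

end Matrix

theorem stmt5_schur_complement_bounds_general (a b : ℕ)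
    (S : Matrix (Fin a) (Fin a) ℝ) (T : Matrix (Fin a) (Fin b) ℝ)
    (R : Matrix (Fin b) (Fin b) ℝ)
    (pl pu : ℝ) (hpl : 0 < pl) (hplu : pl ≤ pu)
    (hlow : (Matrix.fromBlocks S T Tᵀ R - pl • (1 : Matrix (Fin a ⊕ Fin b) (Fin a ⊕ Fin b) ℝ)).PosSemidef)
    (hup : (pu • (1 : Matrix (Fin a ⊕ Fin b) (Fin a ⊕ Fin b) ℝ) - Matrix.fromBlocks S T Tᵀ R).PosSemidef) :
    IsUnit R ∧
    ‖T * Tᵀ‖ ≤ pu ^ 2 ∧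
    (S - T * R⁻¹ * Tᵀ - pl • (1 : Matrix (Fin a) (Fin a) ℝ)).PosSemidef ∧
    ((pu * (1 + pu ^ 2 / pl ^ 2)) • (1 : Matrix (Fin a) (Fin a) ℝ) -
        (S - T * R⁻¹ * Tᵀ)).PosSemidef := by
  simp only [← conjTranspose_eq_transpose_of_trivial] at hlow hup ⊢
  have hpu : 0 < pu := hpl.trans_le hplu
  have hR : R.PosDef :=
    ((fromBlocks_sub_smul_one S T Tᴴ R pl ▸ hlow).of_fromBlocks₂₂).posDef_of_sub_smul_one hpl
  refine ⟨hR.isUnit, l2_opNorm_mul_conjTranspose_le hpu (hlow.of_sub_smul_one hpl.le) hup,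
    posSemidef_schur_sub_smul_one hpl.le hR hlow,
    (posSemidef_smul_one_sub_schur hR hup).smul_one_sub_of_le ?_⟩
  have : 0 ≤ pu ^ 2 / pl ^ 2 := by positivity
  nlinarith

/-- Let `P_N = [[S, T], [Tᵀ, R]]` be a symmetric real `(a+b) × (a+b)` matrix in
block form, with `p̲ I ≤ P_N ≤ p̄ I` for constants `0 < p̲ ≤ p̄`.  Then `R` is invertible, the
(ℓ²-)operator norm of `T Tᵀ` is at most `p̄²`, and the Schur complement `P = S − T R⁻¹ Tᵀ`
satisfies `p̲ I ≤ P ≤ p̄ (1 + p̄²/p̲²) I`.  (`M ≤ M'` means `M' − M` is positive semidefinite.) -/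
theorem stmt5_schur_complement_bounds (a b : ℕ)
    (S : Matrix (Fin a) (Fin a) ℝ) (T : Matrix (Fin a) (Fin b) ℝ)
    (R : Matrix (Fin b) (Fin b) ℝ)
    (hsymm : (Matrix.fromBlocks S T Tᵀ R).IsSymm)
    (pl pu : ℝ) (hpl : 0 < pl) (hplu : pl ≤ pu)
    (hlow : (Matrix.fromBlocks S T Tᵀ R - pl • (1 : Matrix (Fin a ⊕ Fin b) (Fin a ⊕ Fin b) ℝ)).PosSemidef)
    (hup : (pu • (1 : Matrix (Fin a ⊕ Fin b) (Fin a ⊕ Fin b) ℝ) - Matrix.fromBlocks S T Tᵀ R).PosSemidef) :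
    IsUnit R ∧
    ‖T * Tᵀ‖ ≤ pu ^ 2 ∧
    (S - T * R⁻¹ * Tᵀ - pl • (1 : Matrix (Fin a) (Fin a) ℝ)).PosSemidef ∧
    ((pu * (1 + pu ^ 2 / pl ^ 2)) • (1 : Matrix (Fin a) (Fin a) ℝ) -
        (S - T * R⁻¹ * Tᵀ)).PosSemidef :=
  stmt5_schur_complement_bounds_general a b S T R pl pu hpl hplu hlow hup
end

section
/- Let S : ℝ^m → ℝ^{a×a}, T : ℝ^m → ℝ^{a×b}, R : ℝ^m → ℝ^{b×b} be matrix-valued maps differentiable at a point z ∈ ℝ^m, with R(z) invertible, and let P_N(z) = [[S(z), T(z)], [T(z)ᵀ, R(z)]] denote the corresponding block-matrix-valued map. Then the Schur complement P(z) = S(z) − T(z)R(z)⁻¹T(z)ᵀ is differentiable at z and, for every direction w ∈ ℝ^m, its directional derivative satisfies DP(z)[w] = [I_a, −T(z)R(z)⁻¹] · DP_N(z)[w] · [I_a; −R(z)⁻¹T(z)ᵀ], where DP_N(z)[w] is the blockwise directional derivative of P_N at z in direction w. -/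
/-!
With `N = R⁻¹`, the product rule gives
`DP = DS − DT·N·Tᵀ − T·DN·Tᵀ − T·N·DTᵀ` and inversion has derivative `DN = −N·DR·N`;
expanding the block product `[I, −T N] · DP_N · [I; −N Tᵀ]` yields the same four terms.

Entry arrays `n → n → 𝕜` carry the sup norm but no normed-ring structure, so the derivative of
matrix inversion is transported from that of `Ring.inverse` in the complete normed algebra
`(n → 𝕜) →L[𝕜] (n → 𝕜)`, through the algebra isomorphism `Matrix.toLin'`.
-/

open Matrix

theorem map_ringInverse {M N F : Type*} [MonoidWithZero M] [MonoidWithZero N] [EquivLike F M N]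
    [MulEquivClass F M N] (f : F) (x : M) : f (Ring.inverse x) = Ring.inverse (f x) := by
  by_cases hx : IsUnit x
  · obtain ⟨u, rfl⟩ := hx
    simpa using (Ring.inverse_unit (Units.map (f : M →* N) u)).symm
  · rw [Ring.inverse_non_unit x hx, Ring.inverse_non_unit _ (by rwa [isUnit_map_iff]), map_zero]

namespace Matrix

theorem fromCols_one_neg_mul_fromBlocks_mul_fromRows_one_neg {l m α : Type*} [Fintype l]
    [Fintype m] [DecidableEq l] [Ring α] (X : Matrix l m α) (Y : Matrix m l α)
    (A : Matrix l l α) (B : Matrix l m α) (C : Matrix m l α) (D : Matrix m m α) :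
    fromCols (1 : Matrix l l α) (-X) * fromBlocks A B C D * fromRows (1 : Matrix l l α) (-Y) =
      A - B * Y - X * C + X * D * Y := by
  rw [fromCols_mul_fromBlocks, fromCols_mul_fromRows]
  simp only [Matrix.one_mul, Matrix.mul_one, Matrix.neg_mul, Matrix.mul_neg, Matrix.add_mul]
  abel

variable {𝕜 : Type*} [NontriviallyNormedField 𝕜] [CompleteSpace 𝕜] {l m n : Type*} [Fintype l]
  [Fintype m] [Fintype n]

variable (𝕜) in
noncomputable def mulCLM : (l → m → 𝕜) →L[𝕜] (m → n → 𝕜) →L[𝕜] (l → n → 𝕜) :=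
  LinearMap.toContinuousLinearMap (LinearMap.toContinuousLinearMap.toLinearMap ∘ₗ mulLinearMap 𝕜)

@[simp] theorem of_mulCLM (A : l → m → 𝕜) (B : m → n → 𝕜) : of (mulCLM 𝕜 A B) = of A * of B :=
  rfl

variable (𝕜) in
noncomputable def transposeCLM : (m → n → 𝕜) →L[𝕜] (n → m → 𝕜) :=
  LinearMap.toContinuousLinearMap (transposeLinearEquiv m n 𝕜 𝕜).toLinearMap

@[simp] theorem of_transposeCLM (A : m → n → 𝕜) : of (transposeCLM 𝕜 A) = (of A)ᵀ :=
  rfl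

variable [DecidableEq n]

noncomputable def toContinuousLinearMapAlgEquiv :
    Matrix n n 𝕜 ≃ₐ[𝕜] ((n → 𝕜) →L[𝕜] (n → 𝕜)) :=
  toLinAlgEquiv'.trans (Module.End.toContinuousLinearMap (n → 𝕜))

theorem hasFDerivAt_inv {A : n → n → 𝕜} (hA : IsUnit (of A)) :
    HasFDerivAt (fun B => of.symm (of B)⁻¹)
      (-(mulCLM 𝕜 (of.symm (of A)⁻¹) ∘L (mulCLM 𝕜).flip (of.symm (of A)⁻¹))) A := by
  let φ : Matrix n n 𝕜 ≃ₐ[𝕜] ((n → 𝕜) →L[𝕜] (n → 𝕜)) := toContinuousLinearMapAlgEquiv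
  let e : (n → n → 𝕜) ≃L[𝕜] ((n → 𝕜) →L[𝕜] (n → 𝕜)) :=
    ((ofLinearEquiv 𝕜).trans φ.toLinearEquiv).toContinuousLinearEquiv
  have e_apply (B) : e B = φ (of B) := rfl
  have e_mul (X Y) : e (mulCLM 𝕜 X Y) = e X * e Y := map_mul φ (of X) (of Y)
  have e_inv (B) : e (of.symm (of B)⁻¹) = Ring.inverse (e B) := by
    rw [e_apply, e_apply, ← map_ringInverse, nonsing_inv_eq_ringInverse]
    rfl
  have hinv := hasFDerivAt_ringInverse (𝕜 := 𝕜) (hA.map φ).unit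
  rw [← Ring.inverse_unit, IsUnit.unit_spec, ← e_apply] at hinv
  refine ((e.symm.hasFDerivAt.comp A (hinv.comp A e.hasFDerivAt)).congr_of_eventuallyEq
    (.of_forall fun B => e.eq_symm_apply.mpr (e_inv B))).congr_fderiv ?_
  ext1 w
  rw [ContinuousLinearMap.comp_apply, ContinuousLinearEquiv.coe_coe, e.symm_apply_eq]
  simp only [ContinuousLinearMap.neg_comp, _root_.neg_apply, ContinuousLinearMap.comp_apply,
    ContinuousLinearEquiv.coe_coe, ContinuousLinearMap.mulLeftRight_apply, mul_assoc,
    ContinuousLinearMap.flip_apply, map_neg, e_mul, e_inv]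

end Matrix

/-- Let `S, T, R` be matrix-valued maps on `ℝ^m` (viewed entrywise as maps into
the corresponding pi-types), differentiable at `z` with (Fréchet) derivatives `S', T', R'`, and
suppose `R(z)` is invertible.  Then the Schur complement `P = S − T R⁻¹ Tᵀ` is differentiable at
`z`, and for every direction `w` its directional derivative is
`[I, −T(z)R(z)⁻¹] · DP_N(z)[w] · [I; −R(z)⁻¹T(z)ᵀ]`, where
`DP_N(z)[w] = [[S'(w), T'(w)], [T'(w)ᵀ, R'(w)]]` is the blockwise directional derivative. -/
theorem stmt6_schur_complement_derivative (m a b : ℕ)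
    (S : (Fin m → ℝ) → Fin a → Fin a → ℝ)
    (T : (Fin m → ℝ) → Fin a → Fin b → ℝ)
    (R : (Fin m → ℝ) → Fin b → Fin b → ℝ)
    (z : Fin m → ℝ)
    (S' : (Fin m → ℝ) →L[ℝ] (Fin a → Fin a → ℝ))
    (T' : (Fin m → ℝ) →L[ℝ] (Fin a → Fin b → ℝ))
    (R' : (Fin m → ℝ) →L[ℝ] (Fin b → Fin b → ℝ))
    (hS : HasFDerivAt S S' z) (hT : HasFDerivAt T T' z) (hR : HasFDerivAt R R' z)
    (hRz : IsUnit (Matrix.of (R z))) :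
    ∃ P' : (Fin m → ℝ) →L[ℝ] (Fin a → Fin a → ℝ),
      HasFDerivAt
        (fun y =>
          Matrix.of.symm
            (Matrix.of (S y) - Matrix.of (T y) * (Matrix.of (R y))⁻¹ * (Matrix.of (T y))ᵀ))
        P' z ∧
      ∀ w : Fin m → ℝ,
        Matrix.of (P' w) =
          Matrix.fromCols (1 : Matrix (Fin a) (Fin a) ℝ)
              (-(Matrix.of (T z) * (Matrix.of (R z))⁻¹)) *
            Matrix.fromBlocks (Matrix.of (S' w)) (Matrix.of (T' w)) (Matrix.of (T' w))ᵀ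
              (Matrix.of (R' w)) *
            Matrix.fromRows (1 : Matrix (Fin a) (Fin a) ℝ)
              (-((Matrix.of (R z))⁻¹ * (Matrix.of (T z))ᵀ)) := by
  have hN := (hasFDerivAt_inv hRz).comp z hR
  have hP := hS.sub ((mulCLM ℝ).hasFDerivAt_of_bilinear ((mulCLM ℝ).hasFDerivAt_of_bilinear hT hN)
    ((transposeCLM ℝ).hasFDerivAt.comp z hT))
  refine ⟨_, hP, fun w => ?_⟩
  rw [fromCols_one_neg_mul_fromBlocks_mul_fromRows_one_neg]
  simp only [ContinuousLinearMap.neg_comp, map_add, map_neg, _root_.add_apply, _root_.neg_apply,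
    _root_.sub_apply, ContinuousLinearMap.comp_apply, ContinuousLinearMap.precompL_apply,
    ContinuousLinearMap.precompR_apply, ContinuousLinearMap.compL_apply,
    ContinuousLinearMap.flip_apply, ← of_sub_of, ← of_add_of, ← neg_of, of_mulCLM,
    of_transposeCLM, Equiv.apply_symm_apply, Function.comp_apply]
  simp only [Matrix.mul_assoc]
  abel
end

section
/- (Kronecker-product block Lyapunov inequality underlying the global synchronization theorem.) Let P, Q ∈ ℝ^{n×n} be symmetric positive definite, G ∈ ℝ^{n×p}, ρ > 0, μ > 0, ℓ > 0 with ℓμ ≥ ρ, let A ∈ ℝ^{(N−1)×(N−1)} satisfy A + Aᵀ ≤ −μ·I_{N−1}, and let J₂, …, J_N ∈ ℝ^{n×n} satisfy P J_i + J_iᵀ P − ρ P G Gᵀ P ≤ −Q for each i. Then, with B = diag{J₂, …, J_N} + ℓ·(A ⊗ G Gᵀ P), one has (I_{N−1} ⊗ P)·B + Bᵀ·(I_{N−1} ⊗ P) ≤ −(I_{N−1} ⊗ Q). -/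
/-! Moving the terms `ρ PGGᵀP` out of the diagonal blocks, the gap
`-(I ⊗ Q) - ((I ⊗ P) B + Bᵀ (I ⊗ P))` becomes `diag{Xᵢ} + S ⊗ PGGᵀP` with
`Xᵢ = -Q - (P Jᵢ + Jᵢᵀ P - ρ PGGᵀP)` and
`S = -ρ I - ℓ (A + Aᵀ) = (ℓμ - ρ) I + ℓ (-μ I - (A + Aᵀ))`.
Both summands are positive semidefinite: a block-diagonal matrix with PSD blocks, and a Kronecker
product of PSD matrices (`PGGᵀP = (GᵀP)ᵀ(GᵀP)` as `P` is symmetric). -/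

open Matrix
open scoped Kronecker

namespace Matrix

open scoped ComplexOrder

variable {o m n α : Type*}

def blockDiagonalFst [Zero α] [DecidableEq o] (M : o → Matrix m n α) :
    Matrix (o × m) (o × n) α :=
  reindex (Equiv.prodComm m o) (Equiv.prodComm n o) (blockDiagonal M)

section

variable [DecidableEq o]

theorem blockDiagonalFst_apply [Zero α] (M : o → Matrix m n α) (i : o × m) (j : o × n) :
    blockDiagonalFst M i j = if i.1 = j.1 then M i.1 i.2 j.2 else 0 := by
  simp [blockDiagonalFst, blockDiagonal_apply]

theorem one_kronecker_eq_blockDiagonalFst [MulZeroOneClass α] (B : Matrix m n α) :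
    (1 : Matrix o o α) ⊗ₖ B = blockDiagonalFst fun _ => B :=
  one_kronecker B

theorem blockDiagonalFst_add [AddZeroClass α] (M N : o → Matrix m n α) :
    (blockDiagonalFst fun k => M k + N k) = blockDiagonalFst M + blockDiagonalFst N := by
  ext i j
  simp only [blockDiagonalFst_apply, add_apply]
  split_ifs <;> simp

theorem blockDiagonalFst_transpose [Zero α] (M : o → Matrix m n α) :
    (blockDiagonalFst M)ᵀ = blockDiagonalFst fun k => (M k)ᵀ := by
  simp [blockDiagonalFst, blockDiagonal_transpose]

theorem blockDiagonalFst_mul [Fintype o] [Fintype n] {p : Type*} [NonUnitalNonAssocSemiring α]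
    (M : o → Matrix m n α) (N : o → Matrix n p α) :
    blockDiagonalFst M * blockDiagonalFst N = blockDiagonalFst fun k => M k * N k := by
  simp only [blockDiagonalFst, reindex_apply]
  rw [submatrix_mul_equiv, blockDiagonal_mul]

end

open scoped MatrixOrder in
theorem PosSemidef.blockDiagonal {𝕜 : Type*} [RCLike 𝕜] [Fintype o] [DecidableEq o] [Fintype m]
    {M : o → Matrix m m 𝕜} (hM : ∀ k, (M k).PosSemidef) : (blockDiagonal M).PosSemidef := by
  classical
  choose B hB using fun k => CStarAlgebra.nonneg_iff_eq_star_mul_self.mp (hM k).nonneg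
  obtain rfl : M = fun k => (B k)ᴴ * B k := funext hB
  rw [blockDiagonal_mul, ← blockDiagonal_conjTranspose]
  exact posSemidef_conjTranspose_mul_self _

theorem PosSemidef.blockDiagonalFst {𝕜 : Type*} [RCLike 𝕜] [Fintype o] [DecidableEq o] [Fintype m]
    {M : o → Matrix m m 𝕜} (hM : ∀ k, (M k).PosSemidef) : (blockDiagonalFst M).PosSemidef :=
  (PosSemidef.blockDiagonal hM).submatrix _

theorem one_kronecker_mul_add_transpose_mul [CommRing α] [Fintype o] [DecidableEq o] [Fintype n]
    (P : Matrix n n α) (J : o → Matrix n n α) (A : Matrix o o α) (K : Matrix n n α) (c : α) :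
    (1 ⊗ₖ P) * (blockDiagonalFst J + c • (A ⊗ₖ K)) +
        (blockDiagonalFst J + c • (A ⊗ₖ K))ᵀ * (1 ⊗ₖ P) =
      blockDiagonalFst (fun k => P * J k + (J k)ᵀ * P) + c • (A ⊗ₖ (P * K) + Aᵀ ⊗ₖ (Kᵀ * P)) := by
  have hPJ : (1 ⊗ₖ P) * blockDiagonalFst J = blockDiagonalFst fun k => P * J k := by
    rw [one_kronecker_eq_blockDiagonalFst, blockDiagonalFst_mul]
  have hJP : (blockDiagonalFst J)ᵀ * (1 ⊗ₖ P) = blockDiagonalFst fun k => (J k)ᵀ * P := by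
    rw [one_kronecker_eq_blockDiagonalFst, blockDiagonalFst_transpose, blockDiagonalFst_mul]
  have hPAK : (1 ⊗ₖ P) * (A ⊗ₖ K) = A ⊗ₖ (P * K) := by
    rw [← mul_kronecker_mul, one_mul]
  have hAKP : (A ⊗ₖ K)ᵀ * (1 ⊗ₖ P) = Aᵀ ⊗ₖ (Kᵀ * P) := by
    rw [← kroneckerMap_transpose, ← mul_kronecker_mul, mul_one]
  rw [transpose_add, transpose_smul, mul_add, add_mul, Matrix.mul_smul, Matrix.smul_mul, hPJ, hJP,
    hPAK, hAKP, blockDiagonalFst_add, smul_add]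
  abel

end Matrix

theorem stmt9_kronecker_lyapunov_general (n p N1 : ℕ)
    (P Q : Matrix (Fin n) (Fin n) ℝ) (hP : P.PosDef)
    (G : Matrix (Fin n) (Fin p) ℝ)
    (ρ μ ℓ : ℝ) (hℓ : 0 < ℓ) (hℓμ : ρ ≤ ℓ * μ)
    (A : Matrix (Fin N1) (Fin N1) ℝ)
    (hA : ((-μ) • (1 : Matrix (Fin N1) (Fin N1) ℝ) - (A + Aᵀ)).PosSemidef)
    (J : Fin N1 → Matrix (Fin n) (Fin n) ℝ)
    (hJ : ∀ i, ((-Q) - (P * J i + (J i)ᵀ * P - ρ • (P * G * Gᵀ * P))).PosSemidef) :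
    ((-(((1 : Matrix (Fin N1) (Fin N1) ℝ)) ⊗ₖ Q)) -
        (((1 : Matrix (Fin N1) (Fin N1) ℝ) ⊗ₖ P) *
            ((Matrix.of fun i j : Fin N1 × Fin n =>
                if i.1 = j.1 then J i.1 i.2 j.2 else 0) +
              ℓ • (A ⊗ₖ (G * Gᵀ * P))) +
          ((Matrix.of fun i j : Fin N1 × Fin n =>
                if i.1 = j.1 then J i.1 i.2 j.2 else 0) +
              ℓ • (A ⊗ₖ (G * Gᵀ * P)))ᵀ *
            ((1 : Matrix (Fin N1) (Fin N1) ℝ) ⊗ₖ P))).PosSemidef := by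
  have hPt : Pᵀ = P := hP.isHermitian.eq
  set M := P * G * Gᵀ * P
  have hM : M.PosSemidef := by
    simpa [M, Matrix.mul_assoc, transpose_mul, hPt] using posSemidef_conjTranspose_mul_self (Gᵀ * P)
  have hS : ((-ρ) • 1 - ℓ • (A + Aᵀ)).PosSemidef := by
    convert (PosSemidef.one.smul (sub_nonneg.2 hℓμ)).add (hA.smul hℓ.le) using 1
    module
  have hB : (Matrix.of fun i j : Fin N1 × Fin n => if i.1 = j.1 then J i.1 i.2 j.2 else 0) =
      blockDiagonalFst J := by
    ext; simp [blockDiagonalFst_apply]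
  have hPK : P * (G * Gᵀ * P) = M := by simp only [M, Matrix.mul_assoc]
  have hKP : (G * Gᵀ * P)ᵀ * P = M := by
    simp only [M, transpose_mul, hPt, transpose_transpose, Matrix.mul_assoc]
  rw [hB, one_kronecker_mul_add_transpose_mul, hPK, hKP]
  refine (congrArg PosSemidef ?_).mpr ((PosSemidef.blockDiagonalFst hJ).add (hS.kronecker hM))
  ext ⟨k, i⟩ ⟨l, j⟩
  simp only [Matrix.sub_apply, Matrix.neg_apply, Matrix.add_apply, Matrix.smul_apply,
    kroneckerMap_apply, blockDiagonalFst_apply, one_apply, transpose_apply, smul_eq_mul]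
  split_ifs <;> ring

/-- (Kronecker-product block Lyapunov inequality.)  Let `P, Q` be symmetric
positive definite `n × n` matrices, `G ∈ ℝ^{n×p}`, `ρ, μ, ℓ > 0` with `ℓμ ≥ ρ`, let `A` (of size
`N−1`, here `N1`) satisfy `A + Aᵀ ≤ −μ I`, and let `Jᵢ` satisfy
`P Jᵢ + Jᵢᵀ P − ρ P G Gᵀ P ≤ −Q` for each `i`.  Then with
`B = diag{J₂,…,J_N} + ℓ (A ⊗ G Gᵀ P)` one has
`(I ⊗ P) B + Bᵀ (I ⊗ P) ≤ −(I ⊗ Q)`.  (`M ≤ M'` means `M' − M` is positive semidefinite.) -/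
theorem stmt9_kronecker_lyapunov (n p N1 : ℕ)
    (P Q : Matrix (Fin n) (Fin n) ℝ) (hP : P.PosDef) (hQ : Q.PosDef)
    (G : Matrix (Fin n) (Fin p) ℝ)
    (ρ μ ℓ : ℝ) (hρ : 0 < ρ) (hμ : 0 < μ) (hℓ : 0 < ℓ) (hℓμ : ρ ≤ ℓ * μ)
    (A : Matrix (Fin N1) (Fin N1) ℝ)
    (hA : ((-μ) • (1 : Matrix (Fin N1) (Fin N1) ℝ) - (A + Aᵀ)).PosSemidef)
    (J : Fin N1 → Matrix (Fin n) (Fin n) ℝ)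
    (hJ : ∀ i, ((-Q) - (P * J i + (J i)ᵀ * P - ρ • (P * G * Gᵀ * P))).PosSemidef) :
    ((-(((1 : Matrix (Fin N1) (Fin N1) ℝ)) ⊗ₖ Q)) -
        (((1 : Matrix (Fin N1) (Fin N1) ℝ) ⊗ₖ P) *
            ((Matrix.of fun i j : Fin N1 × Fin n =>
                if i.1 = j.1 then J i.1 i.2 j.2 else 0) +
              ℓ • (A ⊗ₖ (G * Gᵀ * P))) +
          ((Matrix.of fun i j : Fin N1 × Fin n =>
                if i.1 = j.1 then J i.1 i.2 j.2 else 0) +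
              ℓ • (A ⊗ₖ (G * Gᵀ * P)))ᵀ *
            ((1 : Matrix (Fin N1) (Fin N1) ℝ) ⊗ₖ P))).PosSemidef :=
  stmt9_kronecker_lyapunov_general n p N1 P Q hP G ρ μ ℓ hℓ hℓμ A hA J hJ
end

section
/- (Kronecker-product tensor inequality underlying the local synchronization theorem.) Let f : ℝⁿ → ℝⁿ be C¹ with Jacobian Jf, P : ℝⁿ → ℝ^{n×n} a C¹ map with symmetric values, U : ℝⁿ → ℝ a C¹ function, α : ℝⁿ → ℝ^p continuous, and suppose ∇U(x)ᵀ = P(x) g(x) α(x) for all x, where g : ℝⁿ → ℝ^{n×p} is continuous. Let Q ∈ ℝ^{n×n} be symmetric positive definite and ρ > 0 be such that DP(x)[f(x)] + P(x)Jf(x) + Jf(x)ᵀP(x) − ρ·∇U(x)ᵀ∇U(x) ≤ −Q for all x ∈ ℝⁿ. Let S ∈ ℝ^{(N−1)×(N−1)} be symmetric positive definite and A ∈ ℝ^{(N−1)×(N−1)} satisfy S A + Aᵀ S ≤ −ν S for some ν > 0, and let ℓ ≥ ρ/ν. Then, setting B(x) = I_{N−1} ⊗ Jf(x) + ℓ·A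 ⊗ (g(x)α(x)∇U(x)), one has for all x ∈ ℝⁿ: S ⊗ (DP(x)[f(x)]) + (S ⊗ P(x))·B(x) + B(x)ᵀ·(S ⊗ P(x)) ≤ −(S ⊗ Q). -/
open Matrix
open scoped Kronecker

/-- The Jacobian matrix of a map `ℝⁿ → ℝⁿ` at a point, entrywise via the Fréchet derivative. -/
noncomputable def stmt10Jac (n : ℕ) (f : (Fin n → ℝ) → Fin n → ℝ) (x : Fin n → ℝ) :
    Matrix (Fin n) (Fin n) ℝ :=
  Matrix.of fun i j => fderiv ℝ f x (Pi.single j 1) i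

/-- The gradient row vector `∇U(x)` of a scalar function on `ℝⁿ`. -/
noncomputable def stmt10Grad (n : ℕ) (U : (Fin n → ℝ) → ℝ) (x : Fin n → ℝ) : Fin n → ℝ :=
  fun j => fderiv ℝ U x (Pi.single j 1)

/-!
Write `v = ∇U(x)ᵀ` and `W = g(x) α(x) ∇U(x)`. Since `P(x)` is symmetric and `P(x) g(x) α(x) = v`,
`P W = Wᵀ P = v vᵀ`, so the mixed-product rule turns the left-hand side into
`S ⊗ (DP[f] + P Jf + Jfᵀ P) + ℓ (S A + Aᵀ S) ⊗ v vᵀ`. Its gap to `−(S ⊗ Q)` then splits as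
`S ⊗ (−Q − DP[f] − P Jf − Jfᵀ P + ρ v vᵀ) + ℓ (−ν S − S A − Aᵀ S) ⊗ v vᵀ + (ℓ ν − ρ) S ⊗ v vᵀ`,
a nonnegative combination of Kronecker products of positive semidefinite matrices.
-/

namespace Matrix

section RankOne

variable {n R : Type*} [Fintype n] [CommSemiring R]

theorem IsSymm.transpose_vecMulVec_mulVec_mul {P : Matrix n n R} (hP : P.IsSymm) (w : n → R) :
    (vecMulVec w (P *ᵥ w))ᵀ * P = P * vecMulVec w (P *ᵥ w) := by
  rw [transpose_vecMulVec, vecMulVec_mul, mul_vecMulVec, ← mulVec_transpose, hP.eq]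

end RankOne

section Kronecker

variable {m n R : Type*} [Fintype m] [Fintype n] [DecidableEq m] [DecidableEq n] [CommRing R]

theorem kronecker_mul_add_transpose_mul (S A : Matrix m m R) (P J W : Matrix n n R) (ℓ : R)
    (hW : Wᵀ * P = P * W) :
    (S ⊗ₖ P) * (1 ⊗ₖ J + ℓ • (A ⊗ₖ W)) + (1 ⊗ₖ J + ℓ • (A ⊗ₖ W))ᵀ * (S ⊗ₖ P) =
      S ⊗ₖ (P * J + Jᵀ * P) + ℓ • ((S * A + Aᵀ * S) ⊗ₖ (P * W)) := by
  rw [transpose_add, transpose_smul, ← kroneckerMap_transpose, ← kroneckerMap_transpose,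
    transpose_one, mul_add, add_mul, mul_smul_comm, smul_mul_assoc, ← mul_kronecker_mul,
    ← mul_kronecker_mul, ← mul_kronecker_mul, ← mul_kronecker_mul, hW, mul_one, one_mul,
    kronecker_add, add_kronecker, smul_add]
  abel

end Kronecker

theorem posSemidef_neg_kronecker_sub {m n : Type*} [Fintype m] [Fintype n]
    {S T : Matrix m m ℝ} {Q M V : Matrix n n ℝ} {ρ ν ℓ : ℝ} (hS : S.PosSemidef)
    (hM : (-Q - (M - ρ • V)).PosSemidef) (hT : ((-ν) • S - T).PosSemidef) (hV : V.PosSemidef)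
    (hℓ : 0 ≤ ℓ) (hρ : ρ ≤ ℓ * ν) :
    (-(S ⊗ₖ Q) - (S ⊗ₖ M + ℓ • (T ⊗ₖ V))).PosSemidef := by
  have split : -(S ⊗ₖ Q) - (S ⊗ₖ M + ℓ • (T ⊗ₖ V)) =
      S ⊗ₖ (-Q - (M - ρ • V)) + ℓ • (((-ν) • S - T) ⊗ₖ V) + (ℓ * ν - ρ) • (S ⊗ₖ V) := by
    ext ⟨i, k⟩ ⟨j, l⟩
    simp only [add_apply, sub_apply, neg_apply, smul_apply, kroneckerMap_apply, smul_eq_mul]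
    ring
  rw [split]
  exact ((hS.kronecker hM).add ((hT.kronecker hV).smul hℓ)).add
    ((hS.kronecker hV).smul (sub_nonneg.2 hρ))

end Matrix

theorem stmt10_kronecker_tensor_inequality_general (n p N1 : ℕ)
    (f : (Fin n → ℝ) → Fin n → ℝ)
    (P : (Fin n → ℝ) → Fin n → Fin n → ℝ)
    (hPsymm : ∀ x, (Matrix.of (P x)).IsSymm)
    (U : (Fin n → ℝ) → ℝ)
    (α : (Fin n → ℝ) → Fin p → ℝ)
    (g : (Fin n → ℝ) → Fin n → Fin p → ℝ)
    (hgrad : ∀ x, stmt10Grad n U x = (Matrix.of (P x) * Matrix.of (g x)).mulVec (α x))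
    (Q : Matrix (Fin n) (Fin n) ℝ) (ρ : ℝ) (hρ : 0 < ρ)
    (hCMF : ∀ x,
      ((-Q) -
          (Matrix.of (fderiv ℝ P x (f x)) + Matrix.of (P x) * stmt10Jac n f x +
              (stmt10Jac n f x)ᵀ * Matrix.of (P x) -
            ρ • Matrix.vecMulVec (stmt10Grad n U x) (stmt10Grad n U x))).PosSemidef)
    (S : Matrix (Fin N1) (Fin N1) ℝ) (hS : S.PosDef)
    (A : Matrix (Fin N1) (Fin N1) ℝ) (ν : ℝ) (hν : 0 < ν)
    (hSA : ((-ν) • S - (S * A + Aᵀ * S)).PosSemidef)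
    (ℓ : ℝ) (hℓ : ρ / ν ≤ ℓ) :
    ∀ x : Fin n → ℝ,
      ((-(S ⊗ₖ Q)) -
          (S ⊗ₖ Matrix.of (fderiv ℝ P x (f x)) +
              (S ⊗ₖ Matrix.of (P x)) *
                ((1 : Matrix (Fin N1) (Fin N1) ℝ) ⊗ₖ stmt10Jac n f x +
                  ℓ • (A ⊗ₖ
                    Matrix.vecMulVec ((Matrix.of (g x)).mulVec (α x)) (stmt10Grad n U x))) +
            ((1 : Matrix (Fin N1) (Fin N1) ℝ) ⊗ₖ stmt10Jac n f x +
                ℓ • (A ⊗ₖ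
                  Matrix.vecMulVec ((Matrix.of (g x)).mulVec (α x)) (stmt10Grad n U x)))ᵀ *
              (S ⊗ₖ Matrix.of (P x)))).PosSemidef := by
  intro x
  have hℓ0 : 0 ≤ ℓ := (div_pos hρ hν).le.trans hℓ
  have hρℓ : ρ ≤ ℓ * ν := (div_le_iff₀ hν).1 hℓ
  set v := stmt10Grad n U x
  set w := Matrix.of (g x) *ᵥ α x
  have hv : v = Matrix.of (P x) *ᵥ w := (hgrad x).trans (mulVec_mulVec _ _ _).symm
  have hW : (vecMulVec w v)ᵀ * Matrix.of (P x) = Matrix.of (P x) * vecMulVec w v := by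
    rw [hv]
    exact (hPsymm x).transpose_vecMulVec_mulVec_mul w
  have hPW : Matrix.of (P x) * vecMulVec w v = vecMulVec v v := by rw [mul_vecMulVec, ← hv]
  have hvv : (vecMulVec v v).PosSemidef := by
    simpa only [star_trivial] using posSemidef_vecMulVec_self_star v
  rw [add_assoc, kronecker_mul_add_transpose_mul _ _ _ _ _ _ hW, hPW, ← add_assoc, ← kronecker_add]
  exact posSemidef_neg_kronecker_sub hS.posSemidef (by simpa only [add_assoc] using hCMF x) hSA
    hvv hℓ0 hρℓ

/-- (Kronecker-product tensor inequality for local synchronization.)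
Under the CMF-type inequality `DP(x)[f(x)] + P Jf + Jfᵀ P − ρ ∇Uᵀ∇U ≤ −Q`, with
`∇Uᵀ = P g α`, `S` symmetric positive definite, `S A + Aᵀ S ≤ −ν S` and `ℓ ≥ ρ/ν`, setting
`B(x) = I ⊗ Jf(x) + ℓ A ⊗ (g(x)α(x)∇U(x))` one has
`S ⊗ DP(x)[f(x)] + (S ⊗ P(x)) B(x) + B(x)ᵀ (S ⊗ P(x)) ≤ −(S ⊗ Q)` for all `x`. -/
theorem stmt10_kronecker_tensor_inequality (n p N1 : ℕ)
    (f : (Fin n → ℝ) → Fin n → ℝ) (hf : ContDiff ℝ 1 f)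
    (P : (Fin n → ℝ) → Fin n → Fin n → ℝ) (hP : ContDiff ℝ 1 P)
    (hPsymm : ∀ x, (Matrix.of (P x)).IsSymm)
    (U : (Fin n → ℝ) → ℝ) (hU : ContDiff ℝ 1 U)
    (α : (Fin n → ℝ) → Fin p → ℝ) (hα : Continuous α)
    (g : (Fin n → ℝ) → Fin n → Fin p → ℝ) (hg : Continuous g)
    (hgrad : ∀ x, stmt10Grad n U x = (Matrix.of (P x) * Matrix.of (g x)).mulVec (α x))
    (Q : Matrix (Fin n) (Fin n) ℝ) (hQ : Q.PosDef) (ρ : ℝ) (hρ : 0 < ρ)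
    (hCMF : ∀ x,
      ((-Q) -
          (Matrix.of (fderiv ℝ P x (f x)) + Matrix.of (P x) * stmt10Jac n f x +
              (stmt10Jac n f x)ᵀ * Matrix.of (P x) -
            ρ • Matrix.vecMulVec (stmt10Grad n U x) (stmt10Grad n U x))).PosSemidef)
    (S : Matrix (Fin N1) (Fin N1) ℝ) (hS : S.PosDef)
    (A : Matrix (Fin N1) (Fin N1) ℝ) (ν : ℝ) (hν : 0 < ν)
    (hSA : ((-ν) • S - (S * A + Aᵀ * S)).PosSemidef)
    (ℓ : ℝ) (hℓ : ρ / ν ≤ ℓ) :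
    ∀ x : Fin n → ℝ,
      ((-(S ⊗ₖ Q)) -
          (S ⊗ₖ Matrix.of (fderiv ℝ P x (f x)) +
              (S ⊗ₖ Matrix.of (P x)) *
                ((1 : Matrix (Fin N1) (Fin N1) ℝ) ⊗ₖ stmt10Jac n f x +
                  ℓ • (A ⊗ₖ
                    Matrix.vecMulVec ((Matrix.of (g x)).mulVec (α x)) (stmt10Grad n U x))) +
            ((1 : Matrix (Fin N1) (Fin N1) ℝ) ⊗ₖ stmt10Jac n f x +
                ℓ • (A ⊗ₖ
                  Matrix.vecMulVec ((Matrix.of (g x)).mulVec (α x)) (stmt10Grad n U x)))ᵀ *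
              (S ⊗ₖ Matrix.of (P x)))).PosSemidef :=
  stmt10_kronecker_tensor_inequality_general n p N1 f P hPsymm U α g hgrad Q ρ hρ hCMF S hS A ν hν
    hSA ℓ hℓ
end

section
/- (TULES-NL implies UES-TL.) Consider the C² system ė = F(e,z), ż = G(e,z) with e ∈ ℝ^{n_e}, z ∈ ℝ^{n_z}, assumed forward complete. Assume TULES-NL: there exist r > 0, k > 0, λ > 0 such that every solution t ↦ (e(t), z(t)) on [0,∞) with |e(0)| ≤ r satisfies |e(t)| ≤ k |e(0)| e^{−λt} for all t ≥ 0. Assume further there exists c > 0 such that |∂F/∂e(0,z)| ≤ c and |∂G/∂z(0,z)| ≤ c for all z ∈ ℝ^{n_z}, and |∂²F/∂e∂e(e,z)| ≤ c, |∂²F/∂z∂e(e,z)| ≤ c, |∂G/∂e(e,z)| ≤ c for all z ∈ ℝ^{n_z} and all e with |e| ≤ k r. Then UES-TL holds: the system ẋ̂ = G(0, x̂) is forward complete, and there exist k̃ > 0, λ̃ > 0 such that every differentiable curve (ẽ, x̂) : [0,∞) → ℝ^{n_e} × ℝ^{n_z} satisfying ẽ'(t) = ∂F/∂e(0, x̂(t))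 ẽ(t) and x̂'(t) = G(0, x̂(t)) satisfies |ẽ(t)| ≤ k̃ e^{−λ̃ t} |ẽ(0)| for all t ≥ 0. -/
/-!
Trajectories starting on `e = 0` stay there by TULES, so `F (0, z) = 0` and `ẋ̂ = G(0, x̂)` is
forward complete. Given a solution `(ẽ, x̂)` of the transversally linear system, start the
nonlinear system at `(ε ẽ(0), x̂(0))`. The derivative bounds make the linearization error
`F(e, z) - ∂F/∂e(0, x̂) e` quadratic in `e` up to a term of size `|z - x̂| |e|`, and two Gronwall
estimates give `|e(T) - ε ẽ(T)| = O(ε²)` on every `[0, T]`. Since TULES bounds `|e(T)|` by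
`k ε |ẽ(0)| e^{-λT}`, dividing by `ε` and letting `ε → 0` yields the linear estimate with the
same constants `k` and `λ`.
-/

open scoped BigOperators

/-- Partial Jacobian `∂F/∂e(0,z)` of `F : ℝ^{n_e} × ℝ^{n_z} → ℝ^{n_e}`. -/
noncomputable def stmt16Fe (ne nz : ℕ)
    (F : EuclideanSpace ℝ (Fin ne) × EuclideanSpace ℝ (Fin nz) → EuclideanSpace ℝ (Fin ne))
    (z : EuclideanSpace ℝ (Fin nz)) : Matrix (Fin ne) (Fin ne) ℝ :=
  Matrix.of fun i j => fderiv ℝ (fun e => F (e, z)) 0 (EuclideanSpace.single j 1) i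

open Set Filter Topology

theorem EuclideanSpace.toLp_mulVec_of_apply_single {ι : Type*} [Fintype ι] [DecidableEq ι]
    (L : EuclideanSpace ℝ ι →L[ℝ] EuclideanSpace ℝ ι) (v : EuclideanSpace ℝ ι) :
    (WithLp.equiv 2 (ι → ℝ)).symm
      ((Matrix.of fun i j => L (EuclideanSpace.single j 1) i).mulVec v) = L v := by
  change Matrix.toLpLin 2 2 _ v = L v
  congr 1
  refine (EuclideanSpace.basisFun ι ℝ).toBasis.ext fun j => ?_
  ext i
  simp [Matrix.toLpLin_apply, Matrix.mulVec_single]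

theorem le_of_forall_Ioc_le_add_mul {x y M δ : ℝ} (hδ : 0 < δ)
    (h : ∀ ε ∈ Ioc 0 δ, x ≤ y + ε * M) : x ≤ y := by
  have hlim : Tendsto (fun ε => y + ε * M) (𝓝[>] 0) (𝓝 y) := by
    refine (Continuous.tendsto' ?_ 0 y (by simp)).mono_left nhdsWithin_le_nhds
    fun_prop
  exact ge_of_tendsto hlim (eventually_of_mem (Ioc_mem_nhdsGT hδ) h)

variable {E Z V : Type*} [NormedAddCommGroup E] [NormedSpace ℝ E]
  [NormedAddCommGroup Z] [NormedSpace ℝ Z] [NormedAddCommGroup V] [NormedSpace ℝ V]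

theorem HasDerivAt.eq_zero_of_forall_Ici_eq_zero {f : ℝ → V} {f' : V} {a : ℝ}
    (hf : HasDerivAt f f' a) (hzero : ∀ t, a ≤ t → f t = 0) : f' = 0 :=
  (uniqueDiffOn_Ici a a self_mem_Ici).eq_deriv _ hf.hasDerivWithinAt
    ((hasDerivWithinAt_const a _ 0).congr (fun t ht => hzero t ht) (hzero a le_rfl))

theorem norm_le_mul_exp_sub_one_of_norm_deriv_le {f f' : ℝ → V} {K B T : ℝ} (hK : 0 < K)
    (hf : ∀ t ∈ Icc 0 T, HasDerivAt f (f' t) t) (h0 : f 0 = 0)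
    (hbound : ∀ t ∈ Ico 0 T, ‖f' t‖ ≤ K * ‖f t‖ + K * B) :
    ∀ t ∈ Icc 0 T, ‖f t‖ ≤ B * (Real.exp (K * t) - 1) := by
  intro t ht
  have h := norm_le_gronwallBound_of_norm_deriv_right_le
    (fun s hs => (hf s hs).continuousAt.continuousWithinAt)
    (fun s hs => (hf s (Ico_subset_Icc_self hs)).hasDerivWithinAt)
    (by rw [h0, norm_zero]) hbound t ht
  simpa [gronwallBound_of_K_ne_0 hK.ne', mul_div_cancel_left₀ _ hK.ne'] using h

theorem norm_sub_le_of_norm_fderiv_le_of_norm_le {f : E → V} {C R : ℝ}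
    (hf : Differentiable ℝ f) (hbound : ∀ x, ‖x‖ ≤ R → ‖fderiv ℝ f x‖ ≤ C)
    {e : E} (he : ‖e‖ ≤ R) : ‖f e - f 0‖ ≤ C * ‖e‖ := by
  simpa using (convex_closedBall (0 : E) R).norm_image_sub_le_of_norm_fderiv_le
    (fun x _ => hf x) (fun x hx => hbound x (mem_closedBall_zero_iff.mp hx))
    (Metric.mem_closedBall_self ((norm_nonneg e).trans he)) (mem_closedBall_zero_iff.mpr he)

theorem norm_sub_sub_fderiv_le_of_norm_fderiv_fderiv_le {f : E → V} {C R : ℝ}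
    (hf : Differentiable ℝ f) (hf' : Differentiable ℝ (fderiv ℝ f))
    (hbound : ∀ x, ‖x‖ ≤ R → ‖fderiv ℝ (fderiv ℝ f) x‖ ≤ C) {e : E} (he : ‖e‖ ≤ R) :
    ‖f e - f 0 - fderiv ℝ f 0 e‖ ≤ C * ‖e‖ ^ 2 := by
  have hC : 0 ≤ C :=
    (norm_nonneg (fderiv ℝ (fderiv ℝ f) 0)).trans
      (hbound 0 (by simpa using (norm_nonneg e).trans he))
  have hderiv : ∀ x ∈ Metric.closedBall (0 : E) ‖e‖, ‖fderiv ℝ f x - fderiv ℝ f 0‖ ≤ C * ‖e‖ :=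
    fun x hx => (norm_sub_le_of_norm_fderiv_le_of_norm_le hf' hbound
      ((mem_closedBall_zero_iff.mp hx).trans he)).trans
      (mul_le_mul_of_nonneg_left (mem_closedBall_zero_iff.mp hx) hC)
  simpa [sq, mul_assoc] using (convex_closedBall (0 : E) ‖e‖).norm_image_sub_le_of_norm_fderiv_le'
    (fun x _ => hf x) hderiv (Metric.mem_closedBall_self (norm_nonneg e))
    (mem_closedBall_zero_iff.mpr le_rfl)

def IsForwardSolution (F : E × Z → E) (G : E × Z → Z) (e : ℝ → E) (z : ℝ → Z) : Prop :=
  ∀ t, 0 ≤ t → HasDerivAt e (F (e t, z t)) t ∧ HasDerivAt z (G (e t, z t)) t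

def IsForwardComplete (F : E × Z → E) (G : E × Z → Z) : Prop :=
  ∀ e0 z0, ∃ e z, e 0 = e0 ∧ z 0 = z0 ∧ IsForwardSolution F G e z

/-- Transversal uniform local exponential stability of the manifold `e = 0` (TULES-NL). -/
def IsTULES (F : E × Z → E) (G : E × Z → Z) (r k lam : ℝ) : Prop :=
  ∀ e z, IsForwardSolution F G e z →
    ‖e 0‖ ≤ r → ∀ t, 0 ≤ t → ‖e t‖ ≤ k * ‖e 0‖ * Real.exp (-lam * t)

section Invariance

variable {F : E × Z → E} {G : E × Z → Z} {r k lam : ℝ}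

theorem exists_isForwardSolution_of_fst_eq_zero (hcomplete : IsForwardComplete F G)
    (hTULES : IsTULES F G r k lam) (hr : 0 ≤ r) (z0 : Z) :
    ∃ e z, z 0 = z0 ∧ IsForwardSolution F G e z ∧ ∀ t, 0 ≤ t → e t = 0 := by
  obtain ⟨e, z, he0, hz0, hsol⟩ := hcomplete 0 z0
  refine ⟨e, z, hz0, hsol, fun t ht => norm_le_zero_iff.mp ?_⟩
  simpa [he0] using hTULES e z hsol (by simpa [he0] using hr) t ht

theorem apply_zero_eq_zero_of_isTULES (hcomplete : IsForwardComplete F G)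
    (hTULES : IsTULES F G r k lam) (hr : 0 ≤ r) (z0 : Z) : F (0, z0) = 0 := by
  obtain ⟨e, z, hz0, hsol, he⟩ :=
    exists_isForwardSolution_of_fst_eq_zero hcomplete hTULES hr z0
  simpa [he 0 le_rfl, hz0] using (hsol 0 le_rfl).1.eq_zero_of_forall_Ici_eq_zero he

theorem exists_reduced_forward_solution_of_isTULES (hcomplete : IsForwardComplete F G)
    (hTULES : IsTULES F G r k lam) (hr : 0 ≤ r) (z0 : Z) :
    ∃ zh : ℝ → Z, zh 0 = z0 ∧ ∀ t, 0 ≤ t → HasDerivAt zh (G (0, zh t)) t := by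
  obtain ⟨e, z, hz0, hsol, he⟩ :=
    exists_isForwardSolution_of_fst_eq_zero hcomplete hTULES hr z0
  exact ⟨z, hz0, fun t ht => he t ht ▸ (hsol t ht).2⟩

end Invariance

/-- `A z` stands for `∂F/∂e(0, z)`; the nonlinear bounds are only required in the tube
`‖e‖ ≤ ρ` around `e = 0`. -/
structure LinearizationBounds (F : E × Z → E) (G : E × Z → Z) (A : Z → E →L[ℝ] E)
    (c ρ : ℝ) : Prop where
  pos : 0 < c
  norm_le : ∀ z, ‖A z‖ ≤ c
  lipschitz : ∀ z z', ‖A z - A z'‖ ≤ c * ‖z - z'‖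
  remainder : ∀ z e, ‖e‖ ≤ ρ → ‖F (e, z) - A z e‖ ≤ c * ‖e‖ ^ 2
  transversal : ∀ z e, ‖e‖ ≤ ρ → ‖G (e, z) - G (0, z)‖ ≤ c * ‖e‖
  tangential : ∀ z z', ‖G (0, z) - G (0, z')‖ ≤ c * ‖z - z'‖

theorem LinearizationBounds.of_contDiff {F : E × Z → E} {G : E × Z → Z} {c ρ : ℝ}
    (hF : ContDiff ℝ 2 F) (hG : ContDiff ℝ 2 G) (hc : 0 < c) (hF0 : ∀ z, F (0, z) = 0)
    (hFe : ∀ z, ‖fderiv ℝ (fun e => F (e, z)) 0‖ ≤ c)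
    (hGz : ∀ z, ‖fderiv ℝ (fun z' => G (0, z')) z‖ ≤ c)
    (hFee : ∀ z e, ‖e‖ ≤ ρ → ‖fderiv ℝ (fderiv ℝ fun e' => F (e', z)) e‖ ≤ c)
    (hFez : ∀ z, ‖fderiv ℝ (fun z' => fderiv ℝ (fun e => F (e, z')) 0) z‖ ≤ c)
    (hGe : ∀ z e, ‖e‖ ≤ ρ → ‖fderiv ℝ (fun e' => G (e', z)) e‖ ≤ c) :
    LinearizationBounds F G (fun z => fderiv ℝ (fun e => F (e, z)) 0) c ρ := by
  have hFd : Differentiable ℝ F := hF.differentiable two_ne_zero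
  have hGd : Differentiable ℝ G := hG.differentiable two_ne_zero
  refine ⟨hc, hFe, fun z z' => ?_, fun z e he => ?_, fun z e he => ?_, fun z z' => ?_⟩
  · have hdiff : Differentiable ℝ fun z' => fderiv ℝ (fun e => F (e, z')) 0 :=
      (ContDiff.fderiv (f := fun z' e => F (e, z')) (by fun_prop) contDiff_const
        le_rfl).differentiable one_ne_zero
    exact convex_univ.norm_image_sub_le_of_norm_fderiv_le (fun x _ => hdiff x)
      (fun x _ => hFez x) (mem_univ z') (mem_univ z)
  · have hdiff : Differentiable ℝ (fderiv ℝ fun e' => F (e', z)) :=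
      ((show ContDiff ℝ 2 fun e' => F (e', z) by fun_prop).fderiv_right
        (m := 1) le_rfl).differentiable one_ne_zero
    simpa [hF0] using norm_sub_sub_fderiv_le_of_norm_fderiv_fderiv_le (by fun_prop) hdiff
      (hFee z) he
  · exact norm_sub_le_of_norm_fderiv_le_of_norm_le (by fun_prop) (hGe z) he
  · exact convex_univ.norm_image_sub_le_of_norm_fderiv_le (by fun_prop)
      (fun x _ => hGz x) (mem_univ z') (mem_univ z)

namespace LinearizationBounds

variable {F : E × Z → E} {G : E × Z → Z} {A : Z → E →L[ℝ] E} {c ρ : ℝ}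

theorem norm_sub_le_of_isForwardSolution (hB : LinearizationBounds F G A c ρ)
    {e : ℝ → E} {z zh : ℝ → Z} (hsol : IsForwardSolution F G e z)
    (hzh : ∀ t, 0 ≤ t → HasDerivAt zh (G (0, zh t)) t) (hz0 : z 0 = zh 0) {a : ℝ}
    (ha : ∀ t, 0 ≤ t → ‖e t‖ ≤ a) (haρ : a ≤ ρ) {t : ℝ} (ht : 0 ≤ t) :
    ‖z t - zh t‖ ≤ a * (Real.exp (c * t) - 1) := by
  refine norm_le_mul_exp_sub_one_of_norm_deriv_le hB.pos
    (fun s hs => (hsol s hs.1).2.sub (hzh s hs.1)) (sub_eq_zero.mpr hz0) (fun s hs => ?_)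
    t ⟨ht, le_rfl⟩
  calc ‖G (e s, z s) - G (0, zh s)‖
      ≤ ‖G (e s, z s) - G (0, z s)‖ + ‖G (0, z s) - G (0, zh s)‖ :=
        norm_sub_le_norm_sub_add_norm_sub _ _ _
    _ ≤ c * a + c * ‖z s - zh s‖ :=
        add_le_add ((hB.transversal _ _ ((ha s hs.1).trans haρ)).trans
          (mul_le_mul_of_nonneg_left (ha s hs.1) hB.pos.le)) (hB.tangential _ _)
    _ = c * ‖z s - zh s‖ + c * a := add_comm _ _

theorem norm_sub_smul_le_of_isForwardSolution (hB : LinearizationBounds F G A c ρ)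
    {e et : ℝ → E} {z zh : ℝ → Z} (hsol : IsForwardSolution F G e z)
    (hlin : IsForwardSolution (fun p => A p.2 p.1) (fun p => G (0, p.2)) et zh)
    {ε : ℝ} (he0 : e 0 = ε • et 0) (hz0 : z 0 = zh 0) {a : ℝ}
    (ha : ∀ t, 0 ≤ t → ‖e t‖ ≤ a) (haρ : a ≤ ρ) {T : ℝ} (hT : 0 ≤ T) :
    ‖e T - ε • et T‖ ≤ a ^ 2 * Real.exp (c * T) * (Real.exp (c * T) - 1) := by
  have ha0 : 0 ≤ a := (norm_nonneg _).trans (ha 0 le_rfl)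
  set D := a * (Real.exp (c * T) - 1) with hD
  have hD0 : 0 ≤ D := mul_nonneg ha0 (sub_nonneg.mpr (Real.one_le_exp (mul_nonneg hB.pos.le hT)))
  have hdist : ∀ s ∈ Icc 0 T, ‖z s - zh s‖ ≤ D := fun s hs =>
    (hB.norm_sub_le_of_isForwardSolution hsol (fun t ht => (hlin t ht).2) hz0 ha haρ hs.1).trans
      (mul_le_mul_of_nonneg_left (by gcongr; exact hB.pos.le; exact hs.2) ha0)
  refine norm_le_mul_exp_sub_one_of_norm_deriv_le hB.pos
    (fun s hs => (hsol s hs.1).1.sub ((hlin s hs.1).1.const_smul ε))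
    (by simp [he0]) (fun s hs => ?_) T ⟨hT, le_rfl⟩
  have hes := ha s hs.1
  have hrem : ‖F (e s, z s) - A (z s) (e s)‖ ≤ c * a ^ 2 :=
    (hB.remainder _ _ (hes.trans haρ)).trans
      (mul_le_mul_of_nonneg_left (pow_le_pow_left₀ (norm_nonneg _) hes 2) hB.pos.le)
  have hdrift : ‖(A (z s) - A (zh s)) (e s)‖ ≤ c * D * a :=
    ((A (z s) - A (zh s)).le_opNorm _).trans (mul_le_mul ((hB.lipschitz _ _).trans
      (mul_le_mul_of_nonneg_left (hdist s (Ico_subset_Icc_self hs)) hB.pos.le)) hes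
      (norm_nonneg _) (mul_nonneg hB.pos.le hD0))
  have hlinear : ‖A (zh s) (e s - ε • et s)‖ ≤ c * ‖e s - ε • et s‖ :=
    ((A (zh s)).le_opNorm _).trans (mul_le_mul_of_nonneg_right (hB.norm_le _) (norm_nonneg _))
  calc ‖F (e s, z s) - ε • A (zh s) (et s)‖
      = ‖(F (e s, z s) - A (z s) (e s)) + (A (z s) - A (zh s)) (e s)
          + A (zh s) (e s - ε • et s)‖ := by
        rw [map_sub, map_smul, sub_apply]; abel_nf
    _ ≤ c * a ^ 2 + c * D * a + c * ‖e s - ε • et s‖ :=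
        (norm_add₃_le ..).trans (add_le_add_three hrem hdrift hlinear)
    _ = c * ‖e s - ε • et s‖ + c * (a ^ 2 * Real.exp (c * T)) := by rw [hD]; ring

theorem norm_le_of_isTULES {r k lam : ℝ} (hB : LinearizationBounds F G A c (k * r))
    (hcomplete : IsForwardComplete F G) (hTULES : IsTULES F G r k lam) (hr : 0 < r)
    (hk : 0 ≤ k) (hlam : 0 ≤ lam) {et : ℝ → E} {zh : ℝ → Z}
    (hlin : IsForwardSolution (fun p => A p.2 p.1) (fun p => G (0, p.2)) et zh)
    {T : ℝ} (hT : 0 ≤ T) : ‖et T‖ ≤ k * Real.exp (-lam * T) * ‖et 0‖ := by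
  set u := et 0
  refine le_of_forall_Ioc_le_add_mul (M := k ^ 2 * ‖u‖ ^ 2 * Real.exp (c * T) *
    (Real.exp (c * T) - 1)) (div_pos hr (by positivity : 0 < ‖u‖ + 1)) fun ε ⟨hε, hεδ⟩ => ?_
  have hεu : ε * ‖u‖ ≤ r := by
    have := (le_div_iff₀ (by positivity)).mp hεδ
    nlinarith [norm_nonneg u]
  obtain ⟨e, z, he0, hz0, hsol⟩ := hcomplete (ε • u) (zh 0)
  have he0n : ‖e 0‖ = ε * ‖u‖ := by rw [he0, norm_smul, Real.norm_of_nonneg hε.le]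
  have hdecay : ∀ t, 0 ≤ t → ‖e t‖ ≤ k * (ε * ‖u‖) * Real.exp (-lam * t) := fun t ht =>
    he0n ▸ hTULES e z hsol (he0n ▸ hεu) t ht
  have hbound : ∀ t, 0 ≤ t → ‖e t‖ ≤ k * (ε * ‖u‖) := fun t ht =>
    (hdecay t ht).trans (mul_le_of_le_one_right (by positivity)
      (Real.exp_le_one_iff.mpr (by nlinarith)))
  have herr := hB.norm_sub_smul_le_of_isForwardSolution hsol hlin he0 hz0 hbound
    (mul_le_mul_of_nonneg_left hεu hk) hT
  refine (mul_le_mul_iff_right₀ hε).mp ?_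
  calc ε * ‖et T‖ = ‖ε • et T‖ := by rw [norm_smul, Real.norm_of_nonneg hε.le]
    _ ≤ ‖e T‖ + ‖e T - ε • et T‖ := norm_le_insert _ _
    _ ≤ k * (ε * ‖u‖) * Real.exp (-lam * T)
        + (k * (ε * ‖u‖)) ^ 2 * Real.exp (c * T) * (Real.exp (c * T) - 1) :=
        add_le_add (hdecay T hT) herr
    _ = ε * (k * Real.exp (-lam * T) * ‖u‖ + ε * (k ^ 2 * ‖u‖ ^ 2 * Real.exp (c * T) *
        (Real.exp (c * T) - 1))) := by ring

end LinearizationBounds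

/-- (Proposition 1 of [AJP]: TULES-NL implies UES-TL.)  If the manifold
`e = 0` is transversally uniformly locally exponentially stable for `ė = F(e,z)`,
`ż = G(e,z)` (forward complete), and the indicated derivative bounds hold, then the
transversally linear system `ẽ' = ∂F/∂e(0,x̂) ẽ`, `x̂' = G(0,x̂)` is uniformly exponentially
stable and `ẋ̂ = G(0,x̂)` is forward complete. -/
theorem stmt16_TULES_implies_UESTL (ne nz : ℕ)
    (F : EuclideanSpace ℝ (Fin ne) × EuclideanSpace ℝ (Fin nz) → EuclideanSpace ℝ (Fin ne))
    (G : EuclideanSpace ℝ (Fin ne) × EuclideanSpace ℝ (Fin nz) → EuclideanSpace ℝ (Fin nz))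
    (hF : ContDiff ℝ 2 F) (hG : ContDiff ℝ 2 G)
    (hcomplete : ∀ e0 z0,
      ∃ (e : ℝ → EuclideanSpace ℝ (Fin ne)) (z : ℝ → EuclideanSpace ℝ (Fin nz)),
        e 0 = e0 ∧ z 0 = z0 ∧
          ∀ t : ℝ, 0 ≤ t →
            HasDerivAt e (F (e t, z t)) t ∧ HasDerivAt z (G (e t, z t)) t)
    (r k lam : ℝ) (hr : 0 < r) (hk : 0 < k) (hlam : 0 < lam)
    (hTULES : ∀ (e : ℝ → EuclideanSpace ℝ (Fin ne)) (z : ℝ → EuclideanSpace ℝ (Fin nz)),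
      (∀ t : ℝ, 0 ≤ t → HasDerivAt e (F (e t, z t)) t ∧ HasDerivAt z (G (e t, z t)) t) →
      ‖e 0‖ ≤ r → ∀ t : ℝ, 0 ≤ t → ‖e t‖ ≤ k * ‖e 0‖ * Real.exp (-lam * t))
    (c : ℝ) (hc : 0 < c)
    (hbnd1 : ∀ z : EuclideanSpace ℝ (Fin nz),
      ‖fderiv ℝ (fun e => F (e, z)) 0‖ ≤ c ∧ ‖fderiv ℝ (fun z' => G (0, z')) z‖ ≤ c)
    (hbnd2 : ∀ (z : EuclideanSpace ℝ (Fin nz)) (e : EuclideanSpace ℝ (Fin ne)), ‖e‖ ≤ k * r →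
      ‖fderiv ℝ (fun e' => fderiv ℝ (fun e'' => F (e'', z)) e') e‖ ≤ c ∧
      ‖fderiv ℝ (fun z' => fderiv ℝ (fun e' => F (e', z')) e) z‖ ≤ c ∧
      ‖fderiv ℝ (fun e' => G (e', z)) e‖ ≤ c) :
    (∀ z0, ∃ zh : ℝ → EuclideanSpace ℝ (Fin nz),
        zh 0 = z0 ∧ ∀ t : ℝ, 0 ≤ t → HasDerivAt zh (G (0, zh t)) t) ∧
      ∃ kt > (0 : ℝ), ∃ lamt > (0 : ℝ),
        ∀ (et : ℝ → EuclideanSpace ℝ (Fin ne)) (zh : ℝ → EuclideanSpace ℝ (Fin nz)),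
          (∀ t : ℝ, 0 ≤ t → HasDerivAt zh (G (0, zh t)) t) →
          (∀ t : ℝ, 0 ≤ t →
              HasDerivAt et
                ((WithLp.equiv 2 (Fin ne → ℝ)).symm
                  ((stmt16Fe ne nz F (zh t)).mulVec (et t))) t) →
          ∀ t : ℝ, 0 ≤ t → ‖et t‖ ≤ kt * Real.exp (-lamt * t) * ‖et 0‖ := by
  have hkr : ‖(0 : EuclideanSpace ℝ (Fin ne))‖ ≤ k * r := by simpa using (mul_pos hk hr).le
  have hB := LinearizationBounds.of_contDiff hF hG hc
    (apply_zero_eq_zero_of_isTULES hcomplete hTULES hr.le) (fun z => (hbnd1 z).1)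
    (fun z => (hbnd1 z).2) (fun z e he => (hbnd2 z e he).1) (fun z => (hbnd2 z 0 hkr).2.1)
    (fun z e he => (hbnd2 z e he).2.2)
  refine ⟨exists_reduced_forward_solution_of_isTULES hcomplete hTULES hr.le, k, hk, lam, hlam,
    fun et zh hzh het t ht => hB.norm_le_of_isTULES hcomplete hTULES hr hk.le hlam.le
      (fun s hs => ⟨?_, hzh s hs⟩) ht⟩
  simpa only [stmt16Fe, EuclideanSpace.toLp_mulVec_of_apply_single] using het s hs
end

section
/- (ULMTE implies TULES-NL.) Consider the C² system ė = F(e,z), ż = G(e,z) with e ∈ ℝ^{n_e}, z ∈ ℝ^{n_z}, assumed forward complete, with F(0,z) = 0 for all z. Suppose there exist a C¹ map P : ℝ^{n_z} → ℝ^{n_e×n_e} with symmetric values, constants 0 < p̲ ≤ p̄, and a symmetric positive definite Q such that for all z ∈ ℝ^{n_z}: p̲·I ≤ P(z) ≤ p̄·I and DP(z)[G(0,z)] + P(z) ∂F/∂e(0,z) + ∂F/∂e(0,z)ᵀ P(z) ≤ −Q. Suppose moreover there exist η > 0 and c > 0 such that the derivative of P is bounded by c on ℝ^{n_z}, and |∂²F/∂e∂e(e,z)|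 ≤ c, |∂²F/∂z∂e(e,z)| ≤ c, |∂G/∂e(e,z)| ≤ c for all z ∈ ℝ^{n_z} and all e with |e| ≤ η. Then TULES-NL holds: there exist r > 0, k > 0, λ > 0 such that every solution t ↦ (e(t), z(t)) of the system on [0,∞) with |e(0)| ≤ r satisfies |e(t)| ≤ k |e(0)| e^{−λt} for all t ≥ 0. -/
open Matrix

/-- coordinates are bounded by the norm -/
theorem aux_coord_le_norm (n : ℕ) (x : EuclideanSpace ℝ (Fin n)) (i : Fin n) : |x i| ≤ ‖x‖ := by
  rw [EuclideanSpace.norm_eq, ← Real.sqrt_sq_eq_abs]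
  apply Real.sqrt_le_sqrt
  calc x i^2 = ‖x i‖^2 := by rw [Real.norm_eq_abs, sq_abs]
    _ ≤ ∑ j, ‖x j‖^2 := Finset.single_le_sum (f := fun j => ‖x j‖^2)
        (fun j _ => by positivity) (Finset.mem_univ i)

theorem aux_norm_sq (n : ℕ) (x : EuclideanSpace ℝ (Fin n)) : ‖x‖^2 = ∑ i, x i^2 := by
  rw [EuclideanSpace.norm_eq, Real.sq_sqrt (by positivity)]
  congr 1; ext j; rw [Real.norm_eq_abs, sq_abs]

theorem aux_dot_self (n : ℕ) (x : EuclideanSpace ℝ (Fin n)) :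
    (fun i => x i) ⬝ᵥ (fun i => x i) = ‖x‖^2 := by
  rw [aux_norm_sq]; simp [dotProduct, sq]

/-- triple sum form of a quadratic/bilinear expression -/
theorem aux_tripleSum (n : ℕ) (M : Matrix (Fin n) (Fin n) ℝ) (u v : Fin n → ℝ) :
    u ⬝ᵥ M.mulVec v = ∑ i, ∑ j, u i * M i j * v j := by
  simp [dotProduct, Matrix.mulVec, Finset.mul_sum, mul_assoc]

/-- coercivity of a positive definite matrix -/
theorem aux_posdef_coercive (n : ℕ) (hn : 0 < n) (Q : Matrix (Fin n) (Fin n) ℝ) (hQ : Q.PosDef) :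
    ∃ q > (0:ℝ), ∀ x : EuclideanSpace ℝ (Fin n), q * ‖x‖^2 ≤ x ⬝ᵥ Q.mulVec x := by
  haveI : Nontrivial (EuclideanSpace ℝ (Fin n)) := by
    apply Module.nontrivial_of_finrank_pos (R := ℝ)
    rw [finrank_euclideanSpace_fin]; exact hn
  have hcont : Continuous (fun v : EuclideanSpace ℝ (Fin n) => (v : Fin n → ℝ) ⬝ᵥ Q.mulVec v) := by
    have h1 : ∀ i, Continuous (fun v : EuclideanSpace ℝ (Fin n) => v i) :=
      fun i => (EuclideanSpace.proj i).continuous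
    unfold dotProduct Matrix.mulVec dotProduct
    fun_prop
  have hcomp : IsCompact (Metric.sphere (0 : EuclideanSpace ℝ (Fin n)) 1) := isCompact_sphere _ _
  have hne : (Metric.sphere (0 : EuclideanSpace ℝ (Fin n)) 1).Nonempty :=
    NormedSpace.sphere_nonempty.2 (by norm_num)
  obtain ⟨v0, hv0, hmin⟩ := hcomp.exists_isMinOn hne hcont.continuousOn
  have hv0n : ‖v0‖ = 1 := by simpa using hv0
  have hv0ne : v0 ≠ 0 := by intro h; rw [h] at hv0n; simp at hv0n
  refine ⟨_, hQ.dotProduct_mulVec_pos (x := (v0 : Fin n → ℝ)) (by intro h; apply hv0ne; ext i; exact congrFun h i), ?_⟩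
  intro x
  rcases eq_or_ne x 0 with rfl | hx
  · simp [Matrix.mulVec_zero]
  · have hxn : (0:ℝ) < ‖x‖ := norm_pos_iff.2 hx
    have hu : (‖x‖⁻¹ • x) ∈ Metric.sphere (0 : EuclideanSpace ℝ (Fin n)) 1 := by
      simp [norm_smul, abs_of_pos (inv_pos.2 hxn), inv_mul_cancel₀ hxn.ne']
    have hmin' := hmin hu
    have hscale : ((‖x‖⁻¹ • x : EuclideanSpace ℝ (Fin n)) : Fin n → ℝ) ⬝ᵥ Q.mulVec (‖x‖⁻¹ • x)
        = ‖x‖⁻¹^2 * (x ⬝ᵥ Q.mulVec x) := by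
      show (‖x‖⁻¹ • (x : Fin n → ℝ)) ⬝ᵥ Q.mulVec (‖x‖⁻¹ • (x : Fin n → ℝ)) = _
      rw [Matrix.mulVec_smul, dotProduct_smul, smul_dotProduct, smul_eq_mul, smul_eq_mul]; ring
    have h2 : v0 ⬝ᵥ Q.mulVec v0 ≤ ‖x‖⁻¹^2 * (x ⬝ᵥ Q.mulVec x) := by
      rw [← hscale]; exact hmin'
    calc (v0 ⬝ᵥ Q.mulVec v0) * ‖x‖^2 ≤ (‖x‖⁻¹^2 * (x ⬝ᵥ Q.mulVec x)) * ‖x‖^2 :=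
          mul_le_mul_of_nonneg_right h2 (by positivity)
      _ = x ⬝ᵥ Q.mulVec x := by field_simp

/-- entries of a symmetric matrix sandwiched between `a•1` and `b•1` are bounded by `b` -/
theorem aux_entry_bound (n : ℕ) (M : Matrix (Fin n) (Fin n) ℝ) (hsym : M.IsSymm)
    (a b : ℝ) (ha : 0 ≤ a)
    (hlo : (M - a • (1 : Matrix (Fin n) (Fin n) ℝ)).PosSemidef)
    (hhi : (b • (1 : Matrix (Fin n) (Fin n) ℝ) - M).PosSemidef) :
    ∀ i j, |M i j| ≤ b := by
  have quad : ∀ x : Fin n → ℝ, a * (x ⬝ᵥ x) ≤ x ⬝ᵥ M.mulVec x ∧ x ⬝ᵥ M.mulVec x ≤ b * (x ⬝ᵥ x) := by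
    intro x
    have h1 := hlo.dotProduct_mulVec_nonneg x
    have h2 := hhi.dotProduct_mulVec_nonneg x
    simp only [RCLike.re_to_real, star_trivial, Matrix.sub_mulVec, dotProduct_sub,
      Matrix.smul_mulVec, Matrix.one_mulVec, dotProduct_smul, smul_eq_mul] at h1 h2
    constructor <;> linarith
  have comp : ∀ (i j : Fin n) (s : ℝ),
      (Pi.single i 1 + Pi.single j s : Fin n → ℝ) ⬝ᵥ M.mulVec (Pi.single i 1 + Pi.single j s)
        = M i i + s * M i j + s * M j i + s^2 * M j j := by
    intro i j s
    simp only [dotProduct, Matrix.mulVec, Pi.add_apply, Pi.single_apply]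
    simp only [mul_ite, ite_mul, mul_zero, zero_mul, mul_one, one_mul, mul_add, add_mul,
      Finset.sum_add_distrib, Finset.sum_ite_eq', Finset.mem_univ, if_true]
    ring
  have dot : ∀ (i j : Fin n) (s : ℝ), i ≠ j →
      (Pi.single i 1 + Pi.single j s : Fin n → ℝ) ⬝ᵥ (Pi.single i 1 + Pi.single j s) = 1 + s^2 := by
    intro i j s hij
    simp only [dotProduct, Pi.single_apply, Pi.add_apply, add_mul, mul_add, mul_ite, ite_mul,
      mul_zero, zero_mul, mul_one, one_mul, Finset.sum_add_distrib,
      Finset.sum_ite_eq', Finset.mem_univ, if_true]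
    rw [if_neg hij, if_neg (Ne.symm hij)]
    ring
  have hdiag : ∀ i, a ≤ M i i ∧ M i i ≤ b := by
    intro i
    have h1 := (quad (Pi.single i 1)).1
    have h2 := (quad (Pi.single i 1)).2
    have hMx : (Pi.single i 1 : Fin n → ℝ) ⬝ᵥ M.mulVec (Pi.single i 1) = M i i := by
      simp only [dotProduct, Matrix.mulVec, Pi.single_apply]
      simp only [mul_ite, ite_mul, mul_zero, zero_mul, mul_one, one_mul,
        Finset.sum_ite_eq', Finset.mem_univ, if_true]
    have hd : (Pi.single i 1 : Fin n → ℝ) ⬝ᵥ (Pi.single i 1) = 1 := by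
      simp only [dotProduct, Pi.single_apply, ite_mul, mul_ite, mul_zero, zero_mul, mul_one,
        Finset.sum_ite_eq', Finset.mem_univ, if_true]
    rw [hMx, hd, mul_one] at h1 h2
    exact ⟨h1, h2⟩
  intro i j
  rcases eq_or_ne i j with rfl | hij
  · have d1 := (hdiag i).1; have d2 := (hdiag i).2
    rw [abs_le]; constructor <;> linarith
  · have hsymm : M j i = M i j := by
      have := hsym.apply i j
      simpa using this
    have h1 := (quad (Pi.single i 1 + Pi.single j 1)).2
    have h2 := (quad (Pi.single i 1 + Pi.single j (-1))).2
    rw [comp i j 1, dot i j 1 hij] at h1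
    rw [comp i j (-1), dot i j (-1) hij] at h2
    rw [hsymm] at h1 h2
    have d1 := (hdiag i).1; have d2 := (hdiag j).1
    rw [abs_le]
    constructor <;> nlinarith

/-- crude bound on a bilinear expression via entry bounds -/
theorem aux_bil_bound (n : ℕ) (M : Matrix (Fin n) (Fin n) ℝ) (B bu bv : ℝ)
    (hB : ∀ i j, |M i j| ≤ B) (u v : Fin n → ℝ)
    (hu : ∀ i, |u i| ≤ bu) (hv : ∀ j, |v j| ≤ bv)
    (hbu : 0 ≤ bu) (hbv : 0 ≤ bv) (hB0 : 0 ≤ B) :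
    |u ⬝ᵥ M.mulVec v| ≤ n^2 * B * bu * bv := by
  rw [aux_tripleSum]
  calc |∑ i, ∑ j, u i * M i j * v j| ≤ ∑ i, |∑ j, u i * M i j * v j| :=
        Finset.abs_sum_le_sum_abs _ _
    _ ≤ ∑ i : Fin n, ∑ j : Fin n, |u i * M i j * v j| :=
        Finset.sum_le_sum fun i _ => Finset.abs_sum_le_sum_abs _ _
    _ ≤ ∑ _i : Fin n, ∑ _j : Fin n, bu * B * bv := by
        apply Finset.sum_le_sum; intro i _
        apply Finset.sum_le_sum; intro j _
        rw [abs_mul, abs_mul]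
        apply mul_le_mul (mul_le_mul (hu i) (hB i j) (abs_nonneg _) hbu) (hv j) (abs_nonneg _)
        positivity
    _ = n^2 * B * bu * bv := by
        simp [Finset.sum_const, Finset.card_univ]; ring

theorem aux_eucl_decomp (n : ℕ) (x : EuclideanSpace ℝ (Fin n)) :
    x = ∑ j, x j • EuclideanSpace.single j (1:ℝ) := by
  ext i
  rw [show (∑ j, x j • EuclideanSpace.single j (1:ℝ)) i
      = ∑ j, (x j • EuclideanSpace.single j (1:ℝ)) i from
    by rw [WithLp.ofLp_sum, Finset.sum_apply]]
  simp [EuclideanSpace.single_apply]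

/-- mean value bound -/
theorem aux_mv (m n : ℕ) (g : EuclideanSpace ℝ (Fin m) → EuclideanSpace ℝ (Fin n))
    (hg : Differentiable ℝ g) (η c : ℝ)
    (hbnd : ∀ x : EuclideanSpace ℝ (Fin m), ‖x‖ ≤ η → ‖fderiv ℝ g x‖ ≤ c)
    (e : EuclideanSpace ℝ (Fin m)) (he : ‖e‖ ≤ η) :
    ‖g e - g 0‖ ≤ c * ‖e‖ := by
  have m0 : (0 : EuclideanSpace ℝ (Fin m)) ∈ Metric.closedBall (0 : EuclideanSpace ℝ (Fin m)) ‖e‖ := by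
    simp
  have me : e ∈ Metric.closedBall (0 : EuclideanSpace ℝ (Fin m)) ‖e‖ := by
    simp [Metric.mem_closedBall, dist_zero_right]
  have key := Convex.norm_image_sub_le_of_norm_fderiv_le
    (fun y _ => hg y)
    (fun y hy => hbnd y (by
      simp only [Metric.mem_closedBall, dist_zero_right] at hy
      exact hy.trans he))
    (convex_closedBall (0 : EuclideanSpace ℝ (Fin m)) ‖e‖) m0 me
  simpa using key

/-- Partial Jacobian `∂F/∂e(0,z)` of `F : ℝ^{n_e} × ℝ^{n_z} → ℝ^{n_e}`. -/
noncomputable def stmt18Fe (ne nz : ℕ)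
    (F : EuclideanSpace ℝ (Fin ne) × EuclideanSpace ℝ (Fin nz) → EuclideanSpace ℝ (Fin ne))
    (z : EuclideanSpace ℝ (Fin nz)) : Matrix (Fin ne) (Fin ne) ℝ :=
  Matrix.of fun i j => fderiv ℝ (fun e => F (e, z)) 0 (EuclideanSpace.single j 1) i

theorem aux_fderiv_mulVec (ne' nz : ℕ)
    (F : EuclideanSpace ℝ (Fin ne') × EuclideanSpace ℝ (Fin nz) → EuclideanSpace ℝ (Fin ne'))
    (z : EuclideanSpace ℝ (Fin nz)) (x : EuclideanSpace ℝ (Fin ne')) (i : Fin ne') :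
    fderiv ℝ (fun e' => F (e', z)) 0 x i = (stmt18Fe ne' nz F z).mulVec (fun j => x j) i := by
  set φ := fderiv ℝ (fun e' => F (e', z)) 0 with hφ
  have h1 : φ x = ∑ j, x j • φ (EuclideanSpace.single j (1:ℝ)) := by
    conv_lhs => rw [aux_eucl_decomp ne' x]
    rw [map_sum]
    exact Finset.sum_congr rfl fun j _ => by rw [_root_.map_smul]
  rw [h1]
  rw [show (∑ j, x j • φ (EuclideanSpace.single j (1:ℝ))) i
      = ∑ j, (x j • φ (EuclideanSpace.single j (1:ℝ))) i from
    by rw [WithLp.ofLp_sum, Finset.sum_apply]]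
  simp only [PiLp.smul_apply, smul_eq_mul]
  simp only [Matrix.mulVec, dotProduct, stmt18Fe, Matrix.of_apply]
  exact Finset.sum_congr rfl fun j _ => by ring

theorem aux_taylor (ne' nz : ℕ)
    (F : EuclideanSpace ℝ (Fin ne') × EuclideanSpace ℝ (Fin nz) → EuclideanSpace ℝ (Fin ne'))
    (hF : ContDiff ℝ 2 F) (η c : ℝ) (hη : 0 < η) (hc : 0 < c)
    (hbnd : ∀ (z : EuclideanSpace ℝ (Fin nz)) (e : EuclideanSpace ℝ (Fin ne')), ‖e‖ ≤ η →
      ‖fderiv ℝ (fun e' => fderiv ℝ (fun e'' => F (e'', z)) e') e‖ ≤ c)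
    (z : EuclideanSpace ℝ (Fin nz)) (e : EuclideanSpace ℝ (Fin ne')) (he : ‖e‖ ≤ η) :
    ‖F (e, z) - F (0, z) - fderiv ℝ (fun e' => F (e', z)) 0 e‖ ≤ c * ‖e‖^2 := by
  set f : EuclideanSpace ℝ (Fin ne') → EuclideanSpace ℝ (Fin ne') := fun e' => F (e', z) with hf
  have hfC : ContDiff ℝ 2 f := hF.comp (contDiff_id.prodMk contDiff_const)
  have hfd : Differentiable ℝ f := hfC.differentiable (by norm_num)
  have hg : Differentiable ℝ (fun e' => fderiv ℝ f e') :=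
    (hfC.fderiv_right (m := 1) (by norm_num)).differentiable (by norm_num)
  have hLip : ∀ x ∈ Metric.closedBall (0 : EuclideanSpace ℝ (Fin ne')) ‖e‖,
      ‖fderiv ℝ f x - fderiv ℝ f 0‖ ≤ c * ‖e‖ := by
    intro x hx
    simp only [Metric.mem_closedBall, dist_zero_right] at hx
    have h0 : (0 : EuclideanSpace ℝ (Fin ne')) ∈ Metric.closedBall (0 : EuclideanSpace ℝ (Fin ne')) η := by
      simp [hη.le]
    have hxm : x ∈ Metric.closedBall (0 : EuclideanSpace ℝ (Fin ne')) η := by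
      simp only [Metric.mem_closedBall, dist_zero_right]; exact hx.trans he
    have := Convex.norm_image_sub_le_of_norm_fderiv_le
      (fun y _ => hg y) (fun y hy => hbnd z y (by simpa [dist_zero_right] using hy))
      (convex_closedBall _ _) h0 hxm
    calc ‖fderiv ℝ f x - fderiv ℝ f 0‖ ≤ c * ‖x - 0‖ := this
      _ ≤ c * ‖e‖ := by rw [sub_zero]; exact mul_le_mul_of_nonneg_left hx hc.le
  have m0 : (0 : EuclideanSpace ℝ (Fin ne')) ∈ Metric.closedBall (0 : EuclideanSpace ℝ (Fin ne')) ‖e‖ := by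
    simp
  have me : e ∈ Metric.closedBall (0 : EuclideanSpace ℝ (Fin ne')) ‖e‖ := by
    simp [Metric.mem_closedBall, dist_zero_right]
  have key := Convex.norm_image_sub_le_of_norm_fderiv_le'
    (fun y _ => hfd y) hLip (convex_closedBall (0 : EuclideanSpace ℝ (Fin ne')) ‖e‖) m0 me
  simpa [mul_comm, sq, mul_assoc, mul_left_comm] using key
set_option maxHeartbeats 2000000 in
/-- (Proposition 3 of [AJP]: ULMTE implies TULES-NL.)  If there is a C¹
symmetric-matrix-valued `P` with `p̲ I ≤ P ≤ p̄ I` satisfying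
`DP(z)[G(0,z)] + P(z) ∂F/∂e(0,z) + ∂F/∂e(0,z)ᵀ P(z) ≤ −Q` for a positive definite `Q`, with
the indicated boundedness assumptions, then the manifold `e = 0` is transversally uniformly
locally exponentially stable for `ė = F(e,z)`, `ż = G(e,z)`. -/
theorem stmt18_ULMTE_implies_TULES (ne nz : ℕ)
    (F : EuclideanSpace ℝ (Fin ne) × EuclideanSpace ℝ (Fin nz) → EuclideanSpace ℝ (Fin ne))
    (G : EuclideanSpace ℝ (Fin ne) × EuclideanSpace ℝ (Fin nz) → EuclideanSpace ℝ (Fin nz))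
    (hF : ContDiff ℝ 2 F) (hG : ContDiff ℝ 2 G)
    (hF0 : ∀ z, F (0, z) = 0)
    (hcomplete : ∀ e0 z0,
      ∃ (e : ℝ → EuclideanSpace ℝ (Fin ne)) (z : ℝ → EuclideanSpace ℝ (Fin nz)),
        e 0 = e0 ∧ z 0 = z0 ∧
          ∀ t : ℝ, 0 ≤ t →
            HasDerivAt e (F (e t, z t)) t ∧ HasDerivAt z (G (e t, z t)) t)
    (P : EuclideanSpace ℝ (Fin nz) → Fin ne → Fin ne → ℝ) (hP : ContDiff ℝ 1 P)
    (hPsymm : ∀ z, (Matrix.of (P z)).IsSymm)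
    (pl pu : ℝ) (hpl : 0 < pl) (hplu : pl ≤ pu)
    (hPbnd : ∀ z, (Matrix.of (P z) - pl • (1 : Matrix (Fin ne) (Fin ne) ℝ)).PosSemidef ∧
      (pu • (1 : Matrix (Fin ne) (Fin ne) ℝ) - Matrix.of (P z)).PosSemidef)
    (Q : Matrix (Fin ne) (Fin ne) ℝ) (hQ : Q.PosDef)
    (hLyap : ∀ z,
      ((-Q) -
          (Matrix.of (fderiv ℝ P z (G (0, z))) + Matrix.of (P z) * stmt18Fe ne nz F z +
            (stmt18Fe ne nz F z)ᵀ * Matrix.of (P z))).PosSemidef)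
    (η c : ℝ) (hη : 0 < η) (hc : 0 < c)
    (hPdbnd : ∀ z, ‖fderiv ℝ P z‖ ≤ c)
    (hbnd2 : ∀ (z : EuclideanSpace ℝ (Fin nz)) (e : EuclideanSpace ℝ (Fin ne)), ‖e‖ ≤ η →
      ‖fderiv ℝ (fun e' => fderiv ℝ (fun e'' => F (e'', z)) e') e‖ ≤ c ∧
      ‖fderiv ℝ (fun z' => fderiv ℝ (fun e' => F (e', z')) e) z‖ ≤ c ∧
      ‖fderiv ℝ (fun e' => G (e', z)) e‖ ≤ c) :
    ∃ r > (0 : ℝ), ∃ k > (0 : ℝ), ∃ lam > (0 : ℝ),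
      ∀ (e : ℝ → EuclideanSpace ℝ (Fin ne)) (z : ℝ → EuclideanSpace ℝ (Fin nz)),
        (∀ t : ℝ, 0 ≤ t → HasDerivAt e (F (e t, z t)) t ∧ HasDerivAt z (G (e t, z t)) t) →
        ‖e 0‖ ≤ r → ∀ t : ℝ, 0 ≤ t → ‖e t‖ ≤ k * ‖e 0‖ * Real.exp (-lam * t) := by
  rcases Nat.eq_zero_or_pos ne with hne0 | hnep
  · subst hne0
    refine ⟨1, one_pos, 1, one_pos, 1, one_pos, ?_⟩
    intro e z _ _ t _
    have h1 : e t = 0 := by ext i; exact Fin.elim0 i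
    have h2 : e 0 = 0 := by ext i; exact Fin.elim0 i
    rw [h1, h2, norm_zero]
    simp
  obtain ⟨q, hq, hqQ⟩ := aux_posdef_coercive ne hnep Q hQ
  have hpu : 0 < pu := lt_of_lt_of_le hpl hplu
  have hPent : ∀ w i j, |P w i j| ≤ pu := fun w =>
    aux_entry_bound ne (Matrix.of (P w)) (hPsymm w) pl pu hpl.le (hPbnd w).1 (hPbnd w).2
  have hDPent : ∀ (w : EuclideanSpace ℝ (Fin nz)) (v : EuclideanSpace ℝ (Fin nz)) i j,
      |fderiv ℝ P w v i j| ≤ c * ‖v‖ := by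
    intro w v i j
    have h1 : ‖fderiv ℝ P w v i j‖ ≤ ‖fderiv ℝ P w v‖ :=
      (norm_le_pi_norm (fderiv ℝ P w v i) j).trans (norm_le_pi_norm (fderiv ℝ P w v) i)
    have h2 : ‖fderiv ℝ P w v‖ ≤ c * ‖v‖ :=
      le_trans ((fderiv ℝ P w).le_opNorm v)
        (mul_le_mul_of_nonneg_right (hPdbnd w) (norm_nonneg v))
    calc |fderiv ℝ P w v i j| = ‖fderiv ℝ P w v i j‖ := (Real.norm_eq_abs _).symm
      _ ≤ c * ‖v‖ := h1.trans h2
  have hnepos : (0:ℝ) < (ne:ℝ) := by exact_mod_cast hnep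
  set K := (ne:ℝ)^2 * c * (2*pu + c) with hK
  have hKpos : 0 < K := by positivity
  set r' := min η (q / (2*K)) with hr'
  have hr'pos : 0 < r' := lt_min hη (by positivity)
  have hr'η : r' ≤ η := min_le_left _ _
  have hr'K : r' ≤ q / (2*K) := min_le_right _ _
  set lam0 := q / (2*pu) with hlam0
  have hlam0pos : 0 < lam0 := by positivity
  set k := Real.sqrt (pu/pl) with hk
  have hkpos : 0 < k := Real.sqrt_pos.2 (by positivity)
  have hk1 : 1 ≤ k := by
    rw [hk, show (1:ℝ) = Real.sqrt 1 from (Real.sqrt_one).symm]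
    exact Real.sqrt_le_sqrt ((one_le_div (by positivity)).2 hplu)
  refine ⟨r' / (2*k), by positivity, k, hkpos, lam0/2, by positivity, ?_⟩
  intro e z hsol h0
  set V : ℝ → ℝ := fun t => ∑ i, ∑ j, e t i * P (z t) i j * e t j with hVdef
  set D : ℝ → ℝ := fun t => ∑ i, ∑ j,
    (F (e t, z t) i * P (z t) i j * e t j
     + e t i * fderiv ℝ P (z t) (G (e t, z t)) i j * e t j
     + e t i * P (z t) i j * F (e t, z t) j) with hDdef
  have hVquad : ∀ t, V t = (fun i => e t i) ⬝ᵥ (Matrix.of (P (z t))).mulVec (fun i => e t i) :=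
    fun t => (aux_tripleSum ne (Matrix.of (P (z t))) _ _).symm
  have hVlow : ∀ t, pl * ‖e t‖^2 ≤ V t := by
    intro t
    have h1 := (hPbnd (z t)).1.dotProduct_mulVec_nonneg (fun i => e t i)
    simp only [RCLike.re_to_real, star_trivial, Matrix.sub_mulVec, dotProduct_sub,
      Matrix.smul_mulVec, Matrix.one_mulVec, dotProduct_smul, smul_eq_mul] at h1
    rw [hVquad t]
    have h2 := aux_dot_self ne (e t)
    rw [show (fun i => e t i) ⬝ᵥ (fun i => e t i) = ‖e t‖^2 from h2] at h1
    linarith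
  have hVup : ∀ t, V t ≤ pu * ‖e t‖^2 := by
    intro t
    have h1 := (hPbnd (z t)).2.dotProduct_mulVec_nonneg (fun i => e t i)
    simp only [RCLike.re_to_real, star_trivial, Matrix.sub_mulVec, dotProduct_sub,
      Matrix.smul_mulVec, Matrix.one_mulVec, dotProduct_smul, smul_eq_mul] at h1
    rw [hVquad t]
    have h2 := aux_dot_self ne (e t)
    rw [show (fun i => e t i) ⬝ᵥ (fun i => e t i) = ‖e t‖^2 from h2] at h1
    linarith
  have hVder : ∀ t, 0 ≤ t → HasDerivAt V (D t) t := by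
    intro t ht
    obtain ⟨he, hz⟩ := hsol t ht
    have hei : ∀ i : Fin ne, HasDerivAt (fun s => e s i) (F (e t, z t) i) t := by
      intro i
      have := (EuclideanSpace.proj (𝕜 := ℝ) i).hasFDerivAt.comp_hasDerivAt t he
      exact this
    have hPij : ∀ i j, HasDerivAt (fun s => P (z s) i j)
        (fderiv ℝ P (z t) (G (e t, z t)) i j) t := by
      intro i j
      have h1 : HasDerivAt (fun s => P (z s)) (fderiv ℝ P (z t) (G (e t, z t))) t :=
        (hP.differentiable (by norm_num) (z t)).hasFDerivAt.comp_hasDerivAt t hz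
      have h2 := ((ContinuousLinearMap.proj (R := ℝ)
        (φ := fun _ : Fin ne => Fin ne → ℝ) i).hasFDerivAt).comp_hasDerivAt t h1
      have h3 := ((ContinuousLinearMap.proj (R := ℝ)
        (φ := fun _ : Fin ne => ℝ) j).hasFDerivAt).comp_hasDerivAt t h2
      exact h3
    simp only [hVdef, hDdef]
    apply HasDerivAt.fun_sum
    intro i _
    apply HasDerivAt.fun_sum
    intro j _
    have := ((hei i).mul (hPij i j)).mul (hei j)
    exact this.congr_deriv (by simp only [Pi.mul_apply]; ring)
  have hDbound : ∀ t, 0 ≤ t → ‖e t‖ ≤ r' → D t ≤ -lam0 * V t := by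
    intro t ht hlen
    have hxη : ‖e t‖ ≤ η := hlen.trans hr'η
    set nx := ‖e t‖ with hnx
    have hnx0 : 0 ≤ nx := norm_nonneg _
    set xv : Fin ne → ℝ := fun i => e t i with hxv
    set Fv : Fin ne → ℝ := fun i => F (e t, z t) i with hFv
    set A := stmt18Fe ne nz F (z t) with hAdef
    set Mm : Matrix (Fin ne) (Fin ne) ℝ := Matrix.of (P (z t)) with hMm
    set Rv : Fin ne → ℝ := fun i => Fv i - A.mulVec xv i with hRvdef
    set DPfull : Matrix (Fin ne) (Fin ne) ℝ :=
      Matrix.of (fderiv ℝ P (z t) (G (e t, z t))) with hDPfull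
    set DP0 : Matrix (Fin ne) (Fin ne) ℝ :=
      Matrix.of (fderiv ℝ P (z t) (G (0, z t))) with hDP0
    set DPd : Matrix (Fin ne) (Fin ne) ℝ :=
      Matrix.of (fderiv ℝ P (z t) (G (e t, z t) - G (0, z t))) with hDPd
    -- Taylor remainder bound
    have htaylor : ‖F (e t, z t) - F (0, z t) - fderiv ℝ (fun e' => F (e', z t)) 0 (e t)‖
        ≤ c * nx^2 :=
      aux_taylor ne nz F hF η c hη hc (fun z' e' he' => (hbnd2 z' e' he').1) (z t) (e t) hxη
    have hRco : ∀ i, |Rv i| ≤ c * nx^2 := by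
      intro i
      have h1 : Rv i
          = (F (e t, z t) - F (0, z t) - fderiv ℝ (fun e' => F (e', z t)) 0 (e t)) i := by
        simp only [hRvdef, hFv, hxv]
        rw [hF0 (z t)]
        have h2 : (F (e t, z t) - (0:EuclideanSpace ℝ (Fin ne))
            - fderiv ℝ (fun e' => F (e', z t)) 0 (e t)) i
            = F (e t, z t) i - (0:ℝ) - fderiv ℝ (fun e' => F (e', z t)) 0 (e t) i := rfl
        rw [h2, aux_fderiv_mulVec ne nz F (z t) (e t) i]
        ring
      rw [h1]
      exact (aux_coord_le_norm ne _ i).trans htaylor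
    -- bound on G difference
    have hGdiff : ‖G (e t, z t) - G (0, z t)‖ ≤ c * nx := by
      have hgd : Differentiable ℝ (fun e' => G (e', z t)) :=
        (hG.differentiable (by norm_num)).comp (differentiable_id.prodMk (differentiable_const _))
      exact aux_mv ne nz (fun e' => G (e', z t)) hgd η c
        (fun y hy => (hbnd2 (z t) y hy).2.2) (e t) hxη
    -- entry bounds
    have hx_i : ∀ i, |xv i| ≤ nx := fun i => aux_coord_le_norm ne (e t) i
    have hMent : ∀ i j, |Mm i j| ≤ pu := hPent (z t)
    have hDPdent : ∀ i j, |DPd i j| ≤ c * (c * nx) := by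
      intro i j
      calc |DPd i j| ≤ c * ‖G (e t, z t) - G (0, z t)‖ := hDPent (z t) _ i j
        _ ≤ c * (c * nx) := mul_le_mul_of_nonneg_left hGdiff hc.le
    -- split of D
    have hsplit : D t = Fv ⬝ᵥ Mm.mulVec xv + xv ⬝ᵥ DPfull.mulVec xv + xv ⬝ᵥ Mm.mulVec Fv := by
      rw [aux_tripleSum ne Mm Fv xv, aux_tripleSum ne DPfull xv xv, aux_tripleSum ne Mm xv Fv]
      simp only [hDdef, hMm, hFv, hxv, hDPfull, Matrix.of_apply, Finset.sum_add_distrib]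
    -- decomposition of the three pieces
    have harg : Fv = A.mulVec xv + Rv := by
      funext i
      simp only [hRvdef, Pi.add_apply]
      ring
    have hS1 : Fv ⬝ᵥ Mm.mulVec xv
        = (A.mulVec xv) ⬝ᵥ Mm.mulVec xv + Rv ⬝ᵥ Mm.mulVec xv := by
      rw [harg, add_dotProduct]
    have hS3 : xv ⬝ᵥ Mm.mulVec Fv
        = xv ⬝ᵥ Mm.mulVec (A.mulVec xv) + xv ⬝ᵥ Mm.mulVec Rv := by
      rw [harg, Matrix.mulVec_add, dotProduct_add]
    have hDPsplit : DPfull = DP0 + DPd := by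
      have hmap : fderiv ℝ P (z t) (G (e t, z t))
          = fderiv ℝ P (z t) (G (0, z t)) + fderiv ℝ P (z t) (G (e t, z t) - G (0, z t)) := by
        rw [← map_add]
        congr 1
        abel
      ext i j
      show fderiv ℝ P (z t) (G (e t, z t)) i j
        = fderiv ℝ P (z t) (G (0, z t)) i j + fderiv ℝ P (z t) (G (e t, z t) - G (0, z t)) i j
      rw [hmap]
      rfl
    have hS2 : xv ⬝ᵥ DPfull.mulVec xv
        = xv ⬝ᵥ DP0.mulVec xv + xv ⬝ᵥ DPd.mulVec xv := by
      rw [hDPsplit, Matrix.add_mulVec, dotProduct_add]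
    -- Lyapunov quadratic bound
    have hLq := (hLyap (z t)).dotProduct_mulVec_nonneg xv
    simp only [RCLike.re_to_real, star_trivial, Matrix.sub_mulVec, Matrix.neg_mulVec,
      Matrix.add_mulVec, dotProduct_sub, dotProduct_neg, dotProduct_add] at hLq
    -- rewrite the matrix-product quadratic forms
    have hPA : xv ⬝ᵥ (Mm * A).mulVec xv = xv ⬝ᵥ Mm.mulVec (A.mulVec xv) := by
      rw [← Matrix.mulVec_mulVec]
    have hAP : xv ⬝ᵥ (Aᵀ * Mm).mulVec xv = (A.mulVec xv) ⬝ᵥ Mm.mulVec xv := by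
      rw [← Matrix.mulVec_mulVec, Matrix.dotProduct_mulVec xv Aᵀ _, Matrix.vecMul_transpose]
    -- coercivity
    have hqx : q * nx^2 ≤ xv ⬝ᵥ Q.mulVec xv := hqQ (e t)
    -- error bounds
    have hE1 := aux_bil_bound ne Mm pu (c * nx^2) nx hMent Rv xv hRco hx_i
      (by positivity) hnx0 hpu.le
    have hE2 := aux_bil_bound ne DPd (c * (c * nx)) nx nx hDPdent xv xv hx_i hx_i
      hnx0 hnx0 (by positivity)
    have hE3 := aux_bil_bound ne Mm pu nx (c * nx^2) hMent xv Rv hx_i hRco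
      hnx0 (by positivity) hpu.le
    have hb1 := (abs_le.1 hE1).2
    have hb2 := (abs_le.1 hE2).2
    have hb3 := (abs_le.1 hE3).2
    -- assemble
    have hDeq : D t = (xv ⬝ᵥ DP0.mulVec xv + xv ⬝ᵥ (Mm * A).mulVec xv
        + xv ⬝ᵥ (Aᵀ * Mm).mulVec xv)
        + (Rv ⬝ᵥ Mm.mulVec xv + xv ⬝ᵥ DPd.mulVec xv + xv ⬝ᵥ Mm.mulVec Rv) := by
      rw [hsplit, hS1, hS2, hS3, hPA, hAP]
      ring
    have hLyapLe : xv ⬝ᵥ DP0.mulVec xv + xv ⬝ᵥ (Mm * A).mulVec xv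
        + xv ⬝ᵥ (Aᵀ * Mm).mulVec xv ≤ -(xv ⬝ᵥ Q.mulVec xv) := by
      linarith
    have hKe : (ne:ℝ)^2 * pu * (c * nx^2) * nx + (ne:ℝ)^2 * (c * (c * nx)) * nx * nx
        + (ne:ℝ)^2 * pu * nx * (c * nx^2) = K * nx^3 := by
      rw [hK]; ring
    have hcube : K * nx^3 ≤ K * (q / (2*K)) * nx^2 := by
      have h6 : nx^3 ≤ (q / (2*K)) * nx^2 := by
        have := mul_le_mul_of_nonneg_right (hlen.trans hr'K) (by positivity : (0:ℝ) ≤ nx^2)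
        calc nx^3 = nx * nx^2 := by ring
          _ ≤ (q / (2*K)) * nx^2 := this
      calc K * nx^3 ≤ K * ((q / (2*K)) * nx^2) := mul_le_mul_of_nonneg_left h6 hKpos.le
        _ = K * (q / (2*K)) * nx^2 := by ring
    have hKq : K * (q / (2*K)) = q/2 := by field_simp
    have hlp : lam0 * pu = q/2 := by rw [hlam0]; field_simp
    have hVle : V t ≤ pu * nx^2 := hVup t
    have hfinal : -lam0 * (pu * nx^2) ≤ -lam0 * V t := by
      have h7 := mul_le_mul_of_nonneg_left hVle hlam0pos.le
      linarith
    calc D t ≤ -(xv ⬝ᵥ Q.mulVec xv) + (Rv ⬝ᵥ Mm.mulVec xv + xv ⬝ᵥ DPd.mulVec xv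
          + xv ⬝ᵥ Mm.mulVec Rv) := by rw [hDeq]; linarith
      _ ≤ -(q * nx^2) + K * nx^3 := by rw [← hKe]; linarith
      _ ≤ -(q * nx^2) + K * (q / (2*K)) * nx^2 := by linarith
      _ = -lam0 * (pu * nx^2) := by rw [hKq]; linear_combination nx^2 * hlp
      _ ≤ -lam0 * V t := hfinal
  have hdecay : ∀ T, 0 ≤ T → (∀ s ∈ Set.Icc (0:ℝ) T, ‖e s‖ ≤ r') →
      V T ≤ V 0 * Real.exp (-lam0 * T) := by
    intro T hT hbd
    have hWder : ∀ s ∈ Set.Icc (0:ℝ) T,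
        HasDerivAt (fun u => V u * Real.exp (lam0 * u))
          ((D s + lam0 * V s) * Real.exp (lam0 * s)) s := by
      intro s hs
      have h1 := hVder s hs.1
      have h2 : HasDerivAt (fun u => Real.exp (lam0 * u)) (Real.exp (lam0 * s) * lam0) s := by
        have := ((hasDerivAt_id s).const_mul lam0).exp
        simpa [mul_comm] using this
      have h3 := h1.mul h2
      exact h3.congr_deriv (by ring)
    have hanti : AntitoneOn (fun u => V u * Real.exp (lam0 * u)) (Set.Icc 0 T) := by
      apply antitoneOn_of_deriv_nonpos (convex_Icc 0 T)
      · intro s hs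
        exact ((hWder s hs).continuousAt).continuousWithinAt
      · intro s hs
        rw [interior_Icc] at hs
        exact ((hWder s ⟨hs.1.le, hs.2.le⟩).differentiableAt).differentiableWithinAt
      · intro s hs
        rw [interior_Icc] at hs
        rw [(hWder s ⟨hs.1.le, hs.2.le⟩).deriv]
        have hDle := hDbound s hs.1.le (hbd s ⟨hs.1.le, hs.2.le⟩)
        have h5 : D s + lam0 * V s ≤ 0 := by linarith
        have := mul_le_mul_of_nonneg_right h5 (Real.exp_nonneg (lam0 * s))
        simpa using this
    have h01 : (0:ℝ) ∈ Set.Icc (0:ℝ) T := ⟨le_refl _, hT⟩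
    have hT1 : T ∈ Set.Icc (0:ℝ) T := ⟨hT, le_refl _⟩
    have hWle := hanti h01 hT1 hT
    simp only [mul_zero, Real.exp_zero, mul_one] at hWle
    calc V T = V T * Real.exp (lam0*T) * Real.exp (-lam0*T) := by
          rw [mul_assoc, ← Real.exp_add]; simp
      _ ≤ V 0 * Real.exp (-lam0*T) :=
          mul_le_mul_of_nonneg_right hWle (Real.exp_nonneg _)
  have hfin : ∀ T, 0 ≤ T → V T ≤ V 0 * Real.exp (-lam0 * T) →
      ‖e T‖ ≤ k * ‖e 0‖ * Real.exp (-(lam0/2) * T) := by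
    intro T hT h
    have hexp : (0:ℝ) < Real.exp (-lam0 * T) := Real.exp_pos _
    have h1 : pl * ‖e T‖^2 ≤ pu * ‖e 0‖^2 * Real.exp (-lam0 * T) :=
      le_trans (hVlow T) (h.trans (mul_le_mul_of_nonneg_right (hVup 0) hexp.le))
    have h2 : ‖e T‖^2 ≤ (pu/pl) * ‖e 0‖^2 * Real.exp (-lam0 * T) := by
      rw [div_mul_eq_mul_div, div_mul_eq_mul_div, le_div_iff₀ hpl]
      linarith
    have h3 : ‖e T‖ ≤ Real.sqrt ((pu/pl) * ‖e 0‖^2 * Real.exp (-lam0 * T)) := by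
      rw [show ‖e T‖ = Real.sqrt (‖e T‖^2) from (Real.sqrt_sq (norm_nonneg _)).symm]
      exact Real.sqrt_le_sqrt h2
    refine h3.trans_eq ?_
    rw [Real.sqrt_mul (by positivity), Real.sqrt_mul (by positivity),
      Real.sqrt_sq (norm_nonneg _),
      show Real.exp (-lam0 * T) = (Real.exp (-(lam0/2) * T))^2 from by
        rw [sq, ← Real.exp_add]; congr 1; ring,
      Real.sqrt_sq (Real.exp_nonneg _)]
  have hrr : r' / (2*k) ≤ r' / 2 := by
    rw [div_le_div_iff₀ (by positivity) (by norm_num)]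
    nlinarith [hr'pos.le, hk1]
  have hkr : ∀ s, 0 ≤ s → V s ≤ V 0 * Real.exp (-lam0 * s) → ‖e s‖ ≤ r'/2 := by
    intro s hs hdec
    calc ‖e s‖ ≤ k * ‖e 0‖ * Real.exp (-(lam0/2) * s) := hfin s hs hdec
      _ ≤ k * (r'/(2*k)) * 1 := by
          apply mul_le_mul (mul_le_mul_of_nonneg_left h0 hkpos.le) ?_ (Real.exp_nonneg _)
            (by positivity)
          rw [Real.exp_le_one_iff]
          nlinarith [hlam0pos.le]
      _ = r'/2 := by
          field_simp
  have hsmall : ∀ t, 0 ≤ t → ‖e t‖ ≤ r' := by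
    by_contra hcon
    push_neg at hcon
    obtain ⟨t1, ht1, ht1'⟩ := hcon
    set S := {s : ℝ | 0 ≤ s ∧ r' ≤ ‖e s‖} with hSdef
    have hSne : S.Nonempty := ⟨t1, ht1, ht1'.le⟩
    have hSbdd : BddBelow S := ⟨0, fun s hs => hs.1⟩
    have hecont : ContinuousOn (fun s => ‖e s‖) (Set.Ici (0:ℝ)) := fun s hs =>
      (((hsol s hs).1).continuousAt.norm).continuousWithinAt
    have hSclosed : IsClosed S := by
      have hSeq : S = Set.Ici (0:ℝ) ∩ (fun s => ‖e s‖) ⁻¹' Set.Ici r' := by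
        ext s; simp [hSdef, Set.mem_Ici, Set.mem_preimage, and_comm]
      rw [hSeq]
      exact hecont.preimage_isClosed_of_isClosed isClosed_Ici isClosed_Ici
    set t0 := sInf S with ht0def
    have ht0S : t0 ∈ S := hSclosed.csInf_mem hSne hSbdd
    have ht0pos : 0 < t0 := by
      rcases lt_or_eq_of_le ht0S.1 with h | h
      · exact h
      · exfalso
        have : r' ≤ ‖e 0‖ := by rw [← h] at ht0S; exact ht0S.2
        have : r' ≤ r' / (2*k) := this.trans h0
        nlinarith [hr'pos, hrr]
    have hless : ∀ s, 0 ≤ s → s < t0 → ‖e s‖ ≤ r' := by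
      intro s hs hst
      by_contra h
      push_neg at h
      exact absurd (csInf_le hSbdd ⟨hs, h.le⟩) (not_le.2 hst)
    have hmid : ∀ s ∈ Set.Ioo (0:ℝ) t0, ‖e s‖ ≤ r'/2 := by
      intro s hs
      apply hkr s hs.1.le
      apply hdecay s hs.1.le
      intro u hu
      exact hless u hu.1 (lt_of_le_of_lt hu.2 hs.2)
    have hct0 : ContinuousAt (fun s => ‖e s‖) t0 := ((hsol t0 ht0S.1).1.continuousAt).norm
    have htend : Filter.Tendsto (fun s => ‖e s‖) (nhdsWithin t0 (Set.Iio t0)) (nhds ‖e t0‖) :=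
      (hct0.continuousWithinAt).tendsto
    have hle : ‖e t0‖ ≤ r'/2 := by
      apply le_of_tendsto htend
      have hmem : Set.Ioo (0:ℝ) t0 ∈ nhdsWithin t0 (Set.Iio t0) :=
        Ioo_mem_nhdsLT_of_mem (Set.mem_Ioc.2 ⟨ht0pos, le_refl t0⟩)
      filter_upwards [hmem] with s hs
      exact hmid s hs
    have hcontra : r' ≤ r'/2 := le_trans ht0S.2 hle
    linarith
  
  intro t ht
  exact hfin t ht (hdecay t ht (fun s hs => hsmall s hs.1))
end
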